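/- arXiv:math/9806130 — 3 statements merged into one kernel-verified Lean document; each statement's English description precedes it below -/
import Mathlib

section
/- Let M be an A-module algebra over a weak *-Hopf algebra A, let N = M^A, and let l ∈ A be a left integral; define E_l : M → M by E_l(m) := l▷m. Then: (i) E_l(M) ⊆ N and E_l(n·m·n') = n·E_l(m)·n' for all n, n' ∈ N and m ∈ M; (ii) for every d ∈ A_L the element l·d is again a left integral and E_{l·d}(m) = E_l((d▷1_M)·m), while for every d ∈ A_R one has E_{l·d}(m) = E_l(m·(d▷1_M)); (iii) E_l(1_M) = (Σ l₍₁₎·S(l₍₂₎))▷1_M, and this element lies in C(N)∩M_R (C(N) the center of N); in particular, if Σ l₍₁₎·S(l₍₂₎) = 1 (l is normalized) then E_l(1_M) = 1_M, E_l restricts to the identity on N, and E_l is an idempotent projection of M onto N. -/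
open scoped TensorProduct

noncomputable section

/-- The componentwise star operation on a tensor product of star algebras,
as an additive map (it is conjugate-linear, hence not a `LinearMap`). -/
def tensorStar (A B : Type) [Ring A] [Algebra ℂ A] [StarRing A] [StarModule ℂ A]
    [Ring B] [Algebra ℂ B] [StarRing B] [StarModule ℂ B] :
    A ⊗[ℂ] B →+ A ⊗[ℂ] B :=
  TensorProduct.liftAddHom
    (AddMonoidHom.mk'
      (fun a => AddMonoidHom.mk' (fun b => star a ⊗ₜ[ℂ] star b)
        (fun x y => by
          show star a ⊗ₜ[ℂ] star (x + y) = star a ⊗ₜ[ℂ] star x + star a ⊗ₜ[ℂ] star y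
          rw [star_add, TensorProduct.tmul_add]))
      (fun x y => by
        ext b
        show star (x + y) ⊗ₜ[ℂ] star b = star x ⊗ₜ[ℂ] star b + star y ⊗ₜ[ℂ] star b
        rw [star_add, TensorProduct.add_tmul]))
    (fun r a b => by
      show star (r • a) ⊗ₜ[ℂ] star b = star a ⊗ₜ[ℂ] star (r • b)
      rw [star_smul, star_smul, TensorProduct.smul_tmul])

/-- A finite dimensional weak `*`-Hopf algebra over `ℂ` (axioms of [BNS]),
together with the derived properties of the antipode (which follow from the
axioms and are included as fields for convenience). -/
structure WeakHopfAlgebra (A : Type) [Ring A] [Algebra ℂ A] [StarRing A] [StarModule ℂ A] where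
  Δ : A →ₗ[ℂ] A ⊗[ℂ] A
  ε : A →ₗ[ℂ] ℂ
  S : A →ₗ[ℂ] A
  Sinv : A →ₗ[ℂ] A
  finite : FiniteDimensional ℂ A
  Δ_mul : ∀ x y : A, Δ (x * y) = Δ x * Δ y
  Δ_star : ∀ x : A, Δ (star x) = tensorStar A A (Δ x)
  coassoc : ∀ x : A,
    (TensorProduct.assoc ℂ A A A) ((TensorProduct.map Δ (LinearMap.id : A →ₗ[ℂ] A)) (Δ x))
      = (TensorProduct.map (LinearMap.id : A →ₗ[ℂ] A) Δ) (Δ x)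
  counit_left : ∀ x : A,
    (TensorProduct.lid ℂ A) ((TensorProduct.map ε (LinearMap.id : A →ₗ[ℂ] A)) (Δ x)) = x
  counit_right : ∀ x : A,
    (TensorProduct.rid ℂ A) ((TensorProduct.map (LinearMap.id : A →ₗ[ℂ] A) ε) (Δ x)) = x
  unit_weak :
    (Δ 1 ⊗ₜ[ℂ] (1 : A)) * ((TensorProduct.assoc ℂ A A A).symm ((1 : A) ⊗ₜ[ℂ] Δ 1))
      = (TensorProduct.map Δ (LinearMap.id : A →ₗ[ℂ] A)) (Δ 1)
  unit_weak' :
    ((TensorProduct.assoc ℂ A A A).symm ((1 : A) ⊗ₜ[ℂ] Δ 1)) * (Δ 1 ⊗ₜ[ℂ] (1 : A))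
      = (TensorProduct.map Δ (LinearMap.id : A →ₗ[ℂ] A)) (Δ 1)
  counit_weak : ∀ x y z : A,
    ε (x * y * z) = (TensorProduct.lid ℂ ℂ)
      ((TensorProduct.map (ε ∘ₗ LinearMap.mulLeft ℂ x) (ε ∘ₗ LinearMap.mulRight ℂ z)) (Δ y))
  counit_weak' : ∀ x y z : A,
    ε (x * y * z) = (TensorProduct.lid ℂ ℂ)
      ((TensorProduct.map (ε ∘ₗ LinearMap.mulRight ℂ z) (ε ∘ₗ LinearMap.mulLeft ℂ x)) (Δ y))
  antipode_left : ∀ x : A,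
    LinearMap.mul' ℂ A ((TensorProduct.map S (LinearMap.id : A →ₗ[ℂ] A)) (Δ x))
      = (TensorProduct.rid ℂ A)
          ((TensorProduct.map (LinearMap.id : A →ₗ[ℂ] A) (ε ∘ₗ LinearMap.mulLeft ℂ x)) (Δ 1))
  antipode_right : ∀ x : A,
    LinearMap.mul' ℂ A ((TensorProduct.map (LinearMap.id : A →ₗ[ℂ] A) S) (Δ x))
      = (TensorProduct.lid ℂ A)
          ((TensorProduct.map (ε ∘ₗ LinearMap.mulRight ℂ x) (LinearMap.id : A →ₗ[ℂ] A)) (Δ 1))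
  antipode_mid : ∀ x : A,
    LinearMap.mul' ℂ A
      ((TensorProduct.map (LinearMap.mul' ℂ A ∘ₗ TensorProduct.map S (LinearMap.id : A →ₗ[ℂ] A)) S)
        ((TensorProduct.map Δ (LinearMap.id : A →ₗ[ℂ] A)) (Δ x))) = S x
  S_Sinv : ∀ x : A, S (Sinv x) = x
  Sinv_S : ∀ x : A, Sinv (S x) = x
  S_antimul : ∀ x y : A, S (x * y) = S y * S x
  S_anticomul : ∀ x : A, Δ (S x) = (TensorProduct.comm ℂ A A) ((TensorProduct.map S S) (Δ x))
  S_star : ∀ x : A, star (S (star x)) = Sinv x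

/-- The set of elements commuting with everything. -/
def centerSet (R : Type) [Mul R] : Set R := {z | ∀ r : R, z * r = r * z}

namespace WeakHopfAlgebra

variable {A : Type} [Ring A] [Algebra ℂ A] [StarRing A] [StarModule ℂ A]

/-- `Σ x₍₁₎ · S(x₍₂₎)`. -/
def swIdS (W : WeakHopfAlgebra A) (x : A) : A :=
  LinearMap.mul' ℂ A ((TensorProduct.map (LinearMap.id : A →ₗ[ℂ] A) W.S) (W.Δ x))

/-- `Σ S(x₍₁₎) · x₍₂₎`. -/
def swSId (W : WeakHopfAlgebra A) (x : A) : A :=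
  LinearMap.mul' ℂ A ((TensorProduct.map W.S (LinearMap.id : A →ₗ[ℂ] A)) (W.Δ x))

/-- `Σ x₍₂₎ · S⁻¹(x₍₁₎)`. -/
def swIdSinv (W : WeakHopfAlgebra A) (x : A) : A :=
  LinearMap.mul' ℂ A
    ((TensorProduct.map (LinearMap.id : A →ₗ[ℂ] A) W.Sinv) ((TensorProduct.comm ℂ A A) (W.Δ x)))

/-- `Σ S⁻¹(x₍₂₎) · x₍₁₎`. -/
def swSinvId (W : WeakHopfAlgebra A) (x : A) : A :=
  LinearMap.mul' ℂ A
    ((TensorProduct.map W.Sinv (LinearMap.id : A →ₗ[ℂ] A)) ((TensorProduct.comm ℂ A A) (W.Δ x)))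

/-- The left subalgebra `A_L = {(φ ⊗ id)(Δ 1) : φ ∈ A*}`. -/
def AL (W : WeakHopfAlgebra A) : Set A :=
  {a | ∃ φ : A →ₗ[ℂ] ℂ,
    a = (TensorProduct.lid ℂ A) ((TensorProduct.map φ (LinearMap.id : A →ₗ[ℂ] A)) (W.Δ 1))}

/-- The right subalgebra `A_R = {(id ⊗ φ)(Δ 1) : φ ∈ A*}`. -/
def AR (W : WeakHopfAlgebra A) : Set A :=
  {a | ∃ φ : A →ₗ[ℂ] ℂ,
    a = (TensorProduct.rid ℂ A) ((TensorProduct.map (LinearMap.id : A →ₗ[ℂ] A) φ) (W.Δ 1))}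

/-- A left integral: `a · l = Σ a₍₁₎ S(a₍₂₎) · l` for all `a`. -/
def IsLeftIntegral (W : WeakHopfAlgebra A) (l : A) : Prop := ∀ a : A, a * l = W.swIdS a * l

/-- A right integral: `r · a = r · Σ S(a₍₁₎) a₍₂₎` for all `a`. -/
def IsRightIntegral (W : WeakHopfAlgebra A) (r : A) : Prop := ∀ a : A, r * a = r * W.swSId a

/-- A normalized Haar integral. -/
def IsHaar (W : WeakHopfAlgebra A) (h : A) : Prop :=
  W.IsLeftIntegral h ∧ W.IsRightIntegral h ∧ W.swSId h = 1 ∧ W.swIdS h = 1 ∧ W.S h = h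

/-- The canonical left action of a functional `λ ∈ A*` on `A`:
`λ ⇀ a = Σ a₍₁₎ · ⟨λ, a₍₂₎⟩`. -/
def lact (W : WeakHopfAlgebra A) (lam : A →ₗ[ℂ] ℂ) : A →ₗ[ℂ] A :=
  (TensorProduct.rid ℂ A).toLinearMap ∘ₗ
    (TensorProduct.map (LinearMap.id : A →ₗ[ℂ] A) lam) ∘ₗ W.Δ

/-- `λ ∈ A*` is a left integral of the dual weak Hopf algebra:
`λ ⇀ a ∈ A_L` for all `a ∈ A`. -/
def IsDualLeftIntegral (W : WeakHopfAlgebra A) (lam : A →ₗ[ℂ] ℂ) : Prop :=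
  ∀ a : A, W.lact lam a ∈ W.AL

/-- A dual pair of left integrals `(l, λ)`. -/
def IsDualPair (W : WeakHopfAlgebra A) (l : A) (lam : A →ₗ[ℂ] ℂ) : Prop :=
  W.IsLeftIntegral l ∧ W.IsDualLeftIntegral lam ∧
  W.lact lam l = 1 ∧
  (∀ a : A,
    (TensorProduct.rid ℂ A)
      ((TensorProduct.map (LinearMap.id : A →ₗ[ℂ] A) (lam ∘ₗ LinearMap.mulLeft ℂ a)) (W.Δ l))
      = W.S a) ∧
  (∀ a : A,
    (TensorProduct.lid ℂ A)
      ((TensorProduct.map (lam ∘ₗ LinearMap.mulRight ℂ a ∘ₗ W.Sinv)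
        (LinearMap.id : A →ₗ[ℂ] A)) (W.Δ l)) = a)

end WeakHopfAlgebra

/-- A (left) module `*`-algebra over a weak `*`-Hopf algebra. -/
structure ModuleAlgebra {A : Type} [Ring A] [Algebra ℂ A] [StarRing A] [StarModule ℂ A]
    (W : WeakHopfAlgebra A) (M : Type) [Ring M] [Algebra ℂ M] [StarRing M] [StarModule ℂ M] where
  act : A →ₗ[ℂ] M →ₗ[ℂ] M
  act_mul : ∀ (a b : A) (m : M), act (a * b) m = act a (act b m)
  act_one : ∀ m : M, act 1 m = m
  act_mul' : ∀ (a : A) (m n : M),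
    act a (m * n) = LinearMap.mul' ℂ M ((TensorProduct.map (act.flip m) (act.flip n)) (W.Δ a))
  act_star : ∀ (a : A) (m : M), star (act a m) = act (star (W.S a)) (star m)
  act_unit : ∀ a : A, act a 1 = act (W.swIdS a) 1

namespace ModuleAlgebra

variable {A : Type} [Ring A] [Algebra ℂ A] [StarRing A] [StarModule ℂ A]
variable {M : Type} [Ring M] [Algebra ℂ M] [StarRing M] [StarModule ℂ M]
variable {W : WeakHopfAlgebra A}

/-- `M_R = A ▷ 1_M`. -/
def MR (MA : ModuleAlgebra W M) : Set M := Set.range fun a : A => MA.act a 1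

/-- The fixed point algebra `M^A`. -/
def fixed (MA : ModuleAlgebra W M) : Set M :=
  {n | ∀ (a : A) (m : M), MA.act a (m * n) = MA.act a m * n}

end ModuleAlgebra

section Crossed

variable {A : Type} [Ring A] [Algebra ℂ A] [StarRing A] [StarModule ℂ A]
variable {M : Type} [Ring M] [Algebra ℂ M] [StarRing M] [StarModule ℂ M]
variable {W : WeakHopfAlgebra A}

/-- The subspace of `M ⊗ A` by which one divides to form the crossed product
`M ⋊ A = M ⊗_{A_L} A`. -/
def crossedRel (MA : ModuleAlgebra W M) : Submodule ℂ (M ⊗[ℂ] A) :=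
  Submodule.span ℂ
    {x | ∃ (m : M) (a b : A), b ∈ W.AL ∧
      x = (m * MA.act b 1) ⊗ₜ[ℂ] a - m ⊗ₜ[ℂ] (b * a)}

/-- The crossed product `M ⋊ A` as a vector space. -/
abbrev Crossed (MA : ModuleAlgebra W M) : Type := (M ⊗[ℂ] A) ⧸ crossedRel MA

/-- The canonical projection `M ⊗ A → M ⋊ A`; `cmk MA (m ⊗ₜ a)` is `m ⋊ a`. -/
def cmk (MA : ModuleAlgebra W M) : M ⊗[ℂ] A →ₗ[ℂ] Crossed MA := (crossedRel MA).mkQ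

/-- The embedding `M → M ⋊ A`, `m ↦ m ⋊ 1`. -/
def iM (MA : ModuleAlgebra W M) : M →ₗ[ℂ] Crossed MA :=
  cmk MA ∘ₗ (TensorProduct.mk ℂ M A).flip (1 : A)

/-- The map `A → M ⋊ A`, `a ↦ 1 ⋊ a`. -/
def iA (MA : ModuleAlgebra W M) : A →ₗ[ℂ] Crossed MA :=
  cmk MA ∘ₗ (TensorProduct.mk ℂ M A) (1 : M)

/-- The unit `1 ⋊ 1` of `M ⋊ A`. -/
def oneC (MA : ModuleAlgebra W M) : Crossed MA := cmk MA ((1 : M) ⊗ₜ[ℂ] (1 : A))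

/-- The multiplication of the crossed product `M ⋊ A`
(whose existence is the content of Theorem 3.1), as a bundled bilinear map
together with its defining formula on generators:
`(m ⋊ a)(m' ⋊ a') = Σ m (a₍₁₎ ▷ m') ⋊ a₍₂₎ a'`. -/
structure CrossedMul (MA : ModuleAlgebra W M) where
  mul : Crossed MA →ₗ[ℂ] Crossed MA →ₗ[ℂ] Crossed MA
  mul_def : ∀ (m m' : M) (a a' : A),
    mul (cmk MA (m ⊗ₜ[ℂ] a)) (cmk MA (m' ⊗ₜ[ℂ] a'))
      = cmk MA ((TensorProduct.map ((LinearMap.mulLeft ℂ m) ∘ₗ (MA.act.flip m'))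
          (LinearMap.mulRight ℂ a')) (W.Δ a))

/-- The star operation of the crossed product `M ⋊ A`
(whose existence is part of Theorem 3.1):
`(m ⋊ a)* = Σ (a₍₁₎* ▷ m*) ⋊ a₍₂₎*`. -/
structure CrossedStar (MA : ModuleAlgebra W M) where
  st : Crossed MA →+ Crossed MA
  st_smul : ∀ (c : ℂ) (x : Crossed MA), st (c • x) = (starRingEnd ℂ c) • st x
  st_def : ∀ (m : M) (a : A),
    st (cmk MA (m ⊗ₜ[ℂ] a))
      = cmk MA ((TensorProduct.map (MA.act.flip (star m)) (LinearMap.id : A →ₗ[ℂ] A))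
          (W.Δ (star a)))

/-- The multiplication on `(M ⋊ A) ⊗ B` induced by a crossed product
multiplication on `M ⋊ A` and the algebra structure of `B`. -/
def mulT (MA : ModuleAlgebra W M) (CS : CrossedMul MA) (B : Type) [Ring B] [Algebra ℂ B] :
    Crossed MA ⊗[ℂ] B →ₗ[ℂ] Crossed MA ⊗[ℂ] B →ₗ[ℂ] Crossed MA ⊗[ℂ] B :=
  TensorProduct.lift
    ((TensorProduct.mapBilinear (RingHom.id ℂ) (Crossed MA) B (Crossed MA) B).compl₁₂ CS.mul
      (LinearMap.mul ℂ B))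

end Crossed
/-! Elements `d ∈ A_L` (resp. `A_R`) satisfy `Δ d = Δ 1 · (d ⊗ 1)` (resp. `Δ 1 · (1 ⊗ d)`), so they
act on `M` by left (resp. right) multiplication with `d ▷ 1`. As `Σ b₍₁₎ S(b₍₂₎) ∈ A_L` and
`b ▷ 1 = Σ b₍₁₎ S(b₍₂₎) ▷ 1`, an element `n` is fixed iff `b ▷ n = (b ▷ 1) n` for all `b`, and the
integral property `b l = Σ b₍₁₎ S(b₍₂₎) l` then puts `l ▷ m` into `N`. Right `N`-linearity of
`a ▷ ·` is the definition of `N`; left `N`-linearity follows by conjugating with the star, which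
preserves `N`. -/

open TensorProduct LinearMap

section Contraction

variable {R M N P : Type} [CommSemiring R] [AddCommMonoid M] [AddCommMonoid N] [AddCommMonoid P]
  [Module R M] [Module R N] [Module R P]

theorem TensorProduct.apply_lid_map (φ : M →ₗ[R] R) (f : N →ₗ[R] P) (v : M ⊗[R] N) :
    f (TensorProduct.lid R N (map φ id v)) = TensorProduct.lid R P (map φ f v) := by
  induction v using TensorProduct.induction_on with
  | zero => simp
  | tmul x y => simp
  | add x y hx hy => simp [hx, hy]

theorem TensorProduct.apply_rid_map (ψ : N →ₗ[R] R) (f : M →ₗ[R] P) (v : M ⊗[R] N) :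
    f (TensorProduct.rid R M (map id ψ v)) = TensorProduct.rid R P (map f ψ v) := by
  induction v using TensorProduct.induction_on with
  | zero => simp
  | tmul x y => simp
  | add x y hx hy => simp [hx, hy]

end Contraction

section TensorIdentities

variable {R A B C : Type} [CommSemiring R] [Semiring A] [Semiring B] [Semiring C]
  [Algebra R A] [Algebra R B] [Algebra R C]

theorem TensorProduct.mul_tmul_one_eq_map (u : A ⊗[R] B) (a : A) :
    u * (a ⊗ₜ[R] (1 : B)) = map (mulRight R a) id u := by
  rw [← mulRight_apply (R := R), mulRight_tmul, mulRight_one]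

theorem TensorProduct.mul_one_tmul_eq_map (u : A ⊗[R] B) (b : B) :
    u * ((1 : A) ⊗ₜ[R] b) = map id (mulRight R b) u := by
  rw [← mulRight_apply (R := R), mulRight_tmul, mulRight_one]

theorem TensorProduct.mul'_map_id_mulRight (u : A ⊗[R] A) (a : A) :
    mul' R A (map id (mulRight R a) u) = mul' R A u * a := by
  induction u using TensorProduct.induction_on with
  | zero => simp
  | tmul x y => simp [mul_assoc]
  | add x y hx hy => simp [add_mul, hx, hy]

theorem TensorProduct.lid_map_assoc_mul_tmul_one (φ : A →ₗ[R] R) (v : B ⊗[R] C) (w : A ⊗[R] B) :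
    TensorProduct.lid R (B ⊗[R] C) (map φ id (TensorProduct.assoc R A B C
        ((TensorProduct.assoc R A B C).symm ((1 : A) ⊗ₜ v) * (w ⊗ₜ (1 : C))))) =
      v * (TensorProduct.lid R B (map φ id w) ⊗ₜ (1 : C)) := by
  induction v using TensorProduct.induction_on with
  | zero => simp
  | add v₁ v₂ h₁ h₂ => simp only [tmul_add, map_add, add_mul, h₁, h₂]
  | tmul p q =>
    induction w using TensorProduct.induction_on with
    | zero => simp
    | add w₁ w₂ g₁ g₂ => simp only [add_tmul, map_add, mul_add, g₁, g₂]
    | tmul r s => simp [Algebra.TensorProduct.tmul_mul_tmul, smul_tmul']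

theorem TensorProduct.rid_map_mul_assoc_symm (ψ : C →ₗ[R] R) (v : B ⊗[R] C) (w : A ⊗[R] B) :
    TensorProduct.rid R (A ⊗[R] B) (map id ψ
        ((w ⊗ₜ (1 : C)) * (TensorProduct.assoc R A B C).symm ((1 : A) ⊗ₜ v))) =
      w * ((1 : A) ⊗ₜ TensorProduct.rid R B (map id ψ v)) := by
  induction v using TensorProduct.induction_on with
  | zero => simp
  | add v₁ v₂ h₁ h₂ => simp only [tmul_add, map_add, mul_add, h₁, h₂]
  | tmul p q =>
    induction w using TensorProduct.induction_on with
    | zero => simp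
    | add w₁ w₂ g₁ g₂ => simp only [add_tmul, map_add, add_mul, g₁, g₂]
    | tmul r s => simp [Algebra.TensorProduct.tmul_mul_tmul]

end TensorIdentities

namespace WeakHopfAlgebra

variable {A : Type} [Ring A] [Algebra ℂ A] [StarRing A] [StarModule ℂ A] (W : WeakHopfAlgebra A)

theorem comul_eq_of_mem_AL {d : A} (hd : d ∈ W.AL) : W.Δ d = W.Δ 1 * (d ⊗ₜ[ℂ] (1 : A)) := by
  obtain ⟨φ, rfl⟩ := hd
  have hmap : map φ W.Δ = map φ id ∘ₗ map id W.Δ := by rw [← map_comp, comp_id, id_comp]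
  rw [apply_lid_map, hmap, comp_apply, ← W.coassoc 1, ← W.unit_weak',
    lid_map_assoc_mul_tmul_one]

theorem comul_eq_of_mem_AR {d : A} (hd : d ∈ W.AR) : W.Δ d = W.Δ 1 * ((1 : A) ⊗ₜ[ℂ] d) := by
  obtain ⟨ψ, rfl⟩ := hd
  have hmap : map W.Δ ψ = map id ψ ∘ₗ map W.Δ id := by rw [← map_comp, comp_id, id_comp]
  rw [apply_rid_map, hmap, comp_apply, ← W.unit_weak, rid_map_mul_assoc_symm]

theorem swIdS_mem_AL (b : A) : W.swIdS b ∈ W.AL :=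
  ⟨W.ε ∘ₗ mulRight ℂ b, W.antipode_right b⟩

variable {W} in
theorem IsLeftIntegral.mul_right {l : A} (hl : W.IsLeftIntegral l) (d : A) :
    W.IsLeftIntegral (l * d) := fun a => by rw [← mul_assoc, hl a, mul_assoc]

end WeakHopfAlgebra

namespace ModuleAlgebra

variable {A M : Type} [Ring A] [Algebra ℂ A] [StarRing A] [StarModule ℂ A]
  [Ring M] [Algebra ℂ M] [StarRing M] [StarModule ℂ M]
  {W : WeakHopfAlgebra A} (MA : ModuleAlgebra W M)

theorem act_flip_one_comp_mulRight (d : A) :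
    MA.act.flip 1 ∘ₗ mulRight ℂ d = MA.act.flip (MA.act d 1) := by
  ext b
  simp [← MA.act_mul]

theorem act_eq_act_one_mul_of_mem_AL {d : A} (hd : d ∈ W.AL) (m : M) :
    MA.act d m = MA.act d 1 * m := by
  calc MA.act d m = MA.act d (1 * m) := by rw [one_mul]
    _ = mul' ℂ M (map (MA.act.flip 1 ∘ₗ mulRight ℂ d) (MA.act.flip m) (W.Δ 1)) := by
      rw [MA.act_mul', W.comul_eq_of_mem_AL hd, mul_tmul_one_eq_map, map_map, comp_id]
    _ = MA.act 1 (MA.act d 1 * m) := by rw [act_flip_one_comp_mulRight, MA.act_mul']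
    _ = MA.act d 1 * m := MA.act_one _

theorem act_eq_mul_act_one_of_mem_AR {d : A} (hd : d ∈ W.AR) (m : M) :
    MA.act d m = m * MA.act d 1 := by
  calc MA.act d m = MA.act d (m * 1) := by rw [mul_one]
    _ = mul' ℂ M (map (MA.act.flip m) (MA.act.flip 1 ∘ₗ mulRight ℂ d) (W.Δ 1)) := by
      rw [MA.act_mul', W.comul_eq_of_mem_AR hd, mul_one_tmul_eq_map, map_map, comp_id]
    _ = MA.act 1 (m * MA.act d 1) := by rw [act_flip_one_comp_mulRight, MA.act_mul']
    _ = m * MA.act d 1 := MA.act_one _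

theorem act_swIdS (b : A) (m : M) : MA.act (W.swIdS b) m = MA.act b 1 * m := by
  rw [MA.act_eq_act_one_mul_of_mem_AL (W.swIdS_mem_AL b), ← MA.act_unit]

theorem mem_fixed_iff {n : M} : n ∈ MA.fixed ↔ ∀ b : A, MA.act b n = MA.act b 1 * n := by
  refine ⟨fun hn b => by simpa using hn b 1, fun h a m => ?_⟩
  have hflip : MA.act.flip n = mulRight ℂ n ∘ₗ MA.act.flip 1 := by
    ext b
    simp [h b]
  rw [MA.act_mul', hflip, ← id_comp (MA.act.flip m), map_comp, comp_apply,
    mul'_map_id_mulRight, ← MA.act_mul', mul_one]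

theorem star_mem_fixed {n : M} (hn : n ∈ MA.fixed) : star n ∈ MA.fixed := by
  have act_star_n (b : A) : MA.act b (star n) = star n * MA.act b 1 := by
    have h := MA.act_star (W.Sinv (star b)) n
    rw [W.S_Sinv, star_star] at h
    rw [← h, MA.mem_fixed_iff.1 hn, star_mul, MA.act_star, W.S_Sinv, star_star, star_one]
  rw [mem_fixed_iff]
  intro b
  rw [act_star_n, ← MA.act_swIdS, act_star_n, MA.act_unit]

theorem act_mul_of_mem_fixed_left (a : A) {n : M} (hn : n ∈ MA.fixed) (m : M) :
    MA.act a (n * m) = n * MA.act a m := by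
  apply star_injective
  rw [MA.act_star, star_mul, MA.star_mem_fixed hn, star_mul, MA.act_star]

theorem act_one_commute_of_mem_fixed (a : A) {n : M} (hn : n ∈ MA.fixed) :
    Commute (MA.act a 1) n := by
  rw [Commute, SemiconjBy, ← MA.mem_fixed_iff.1 hn, ← mul_one n,
    MA.act_mul_of_mem_fixed_left a hn, mul_one]

theorem act_mem_fixed_of_isLeftIntegral {l : A} (hl : W.IsLeftIntegral l) (m : M) :
    MA.act l m ∈ MA.fixed := by
  rw [mem_fixed_iff]
  intro b
  rw [← MA.act_mul, hl b, MA.act_mul, act_swIdS]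

theorem act_eq_self_of_mem_fixed {a : A} (ha : MA.act a 1 = 1) {n : M} (hn : n ∈ MA.fixed) :
    MA.act a n = n := by
  rw [MA.mem_fixed_iff.1 hn, ha, one_mul]

end ModuleAlgebra

/-- Theorem 2.26 of [NSW] (left integrals and conditional expectations):
for a left integral `l`, `E_l(m) = l ▷ m` maps `M` into `N = M^A` and is an
`N`-`N`-bimodule map; `E_{l·d}(m) = E_l((d ▷ 1)·m)` for `d ∈ A_L` and
`E_{l·d}(m) = E_l(m·(d ▷ 1))` for `d ∈ A_R`;
`E_l(1) = (Σ l₍₁₎ S(l₍₂₎)) ▷ 1 ∈ C(N) ∩ M_R`; and if `l` is normalized then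
`E_l` is an idempotent projection of `M` onto `N` restricting to the identity
on `N`. -/
theorem left_integral_conditional_expectation
    {A M : Type} [Ring A] [Algebra ℂ A] [StarRing A] [StarModule ℂ A]
    [Ring M] [Algebra ℂ M] [StarRing M] [StarModule ℂ M]
    (W : WeakHopfAlgebra A) (MA : ModuleAlgebra W M)
    (l : A) (hl : W.IsLeftIntegral l) :
    (∀ m : M, MA.act l m ∈ MA.fixed)
    ∧ (∀ n ∈ MA.fixed, ∀ n' ∈ MA.fixed, ∀ m : M,
        MA.act l (n * m * n') = n * MA.act l m * n')
    ∧ (∀ d ∈ W.AL,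
        W.IsLeftIntegral (l * d) ∧ ∀ m : M, MA.act (l * d) m = MA.act l (MA.act d 1 * m))
    ∧ (∀ d ∈ W.AR, ∀ m : M, MA.act (l * d) m = MA.act l (m * MA.act d 1))
    ∧ (MA.act l 1 = MA.act (W.swIdS l) 1
        ∧ MA.act l 1 ∈ MA.fixed
        ∧ (∀ n ∈ MA.fixed, MA.act l 1 * n = n * MA.act l 1)
        ∧ MA.act l 1 ∈ MA.MR)
    ∧ (W.swIdS l = 1 →
        MA.act l 1 = 1
        ∧ (∀ n ∈ MA.fixed, MA.act l n = n)
        ∧ (∀ m : M, MA.act l (MA.act l m) = MA.act l m)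
        ∧ Set.range (fun m : M => MA.act l m) = MA.fixed) := by
  have lands_in_fixed := MA.act_mem_fixed_of_isLeftIntegral hl
  refine ⟨lands_in_fixed, fun n hn n' hn' m => ?_, fun d hd => ⟨hl.mul_right d, fun m => ?_⟩,
    fun d hd m => ?_, ⟨MA.act_unit l, lands_in_fixed 1, fun n hn => ?_, ⟨l, rfl⟩⟩, fun h => ?_⟩
  · rw [hn' l, MA.act_mul_of_mem_fixed_left l hn]
  · rw [MA.act_mul, MA.act_eq_act_one_mul_of_mem_AL hd]
  · rw [MA.act_mul, MA.act_eq_mul_act_one_of_mem_AR hd]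
  · exact MA.act_one_commute_of_mem_fixed l hn
  have normalized : MA.act l 1 = 1 := by rw [MA.act_unit, h, MA.act_one]
  have retraction (n : M) (hn : n ∈ MA.fixed) := MA.act_eq_self_of_mem_fixed normalized hn
  refine ⟨normalized, retraction, fun m => retraction _ (lands_in_fixed m), ?_⟩
  exact Set.Subset.antisymm (Set.range_subset_iff.2 lands_in_fixed)
    fun n hn => ⟨n, retraction n hn⟩
end
end

section
/- Let A be a weak *-Hopf algebra with a normalized Haar integral h, and assume (as proved in [BNS]) that h is a positive functional on the dual, i.e. Σ ⟨φ, h₍₁₎⟩·conj(⟨φ, S(h₍₂₎)*⟩) is real and nonnegative for every φ ∈ A*. Then a left integral l ∈ A is a positive functional on the dual (i.e. Σ ⟨φ, l₍₁₎⟩·conj(⟨φ, S(l₍₂₎)*⟩) is real and nonnegative for every φ ∈ A*) if and only if d_R(l) := Σ S(l₍₁₎)·l₍₂₎ is a positive element of A, i.e. a finite sum of elements of the form a*·a. -/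
open scoped TensorProduct

noncomputable section

/-- `x ∈ A` is a positive functional on the dual weak Hopf algebra: for every
`φ ∈ A*`, the value `Σ ⟨φ, x₍₁₎⟩ · conj(⟨φ, S(x₍₂₎)*⟩)` is real and
nonnegative.  (Here the second tensor leg is paired with the `ℂ`-linear
functional `u ↦ conj(φ(S(u)*))`.) -/
def IsPositiveFunctionalOnDual {A : Type} [Ring A] [Algebra ℂ A] [StarRing A] [StarModule ℂ A]
    (W : WeakHopfAlgebra A) (x : A) : Prop :=
  ∀ (φ ψ : A →ₗ[ℂ] ℂ), (∀ u : A, ψ u = starRingEnd ℂ (φ (star (W.S u)))) →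
    ∃ r : ℝ, 0 ≤ r ∧
      (TensorProduct.lid ℂ ℂ) ((TensorProduct.map φ ψ) (W.Δ x)) = (r : ℂ)

/-- `x` is a positive element of the `*`-algebra `A`, i.e. a finite sum of
elements of the form `a* · a`. -/
def IsPositiveElem {A : Type} [Ring A] [StarRing A] (x : A) : Prop :=
  ∃ (n : ℕ) (f : Fin n → A), x = ∑ i, star (f i) * f i


section AuxWHA

open TensorProduct

namespace WeakHopfAlgebra

variable {A : Type} [Ring A] [Algebra ℂ A] [StarRing A] [StarModule ℂ A]

private lemma map_mul_of {B C D E : Type} [Ring B] [Algebra ℂ B] [Ring C] [Algebra ℂ C]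
    [Ring D] [Algebra ℂ D] [Ring E] [Algebra ℂ E]
    (f : B →ₗ[ℂ] D) (g : C →ₗ[ℂ] E)
    (hf : ∀ x y, f (x * y) = f x * f y) (hg : ∀ x y, g (x * y) = g x * g y)
    (s t : B ⊗[ℂ] C) :
    TensorProduct.map f g (s * t) = TensorProduct.map f g s * TensorProduct.map f g t := by
  induction s using TensorProduct.induction_on with
  | zero => simp
  | tmul a b =>
    induction t using TensorProduct.induction_on with
    | zero => simp
    | tmul c d => simp [Algebra.TensorProduct.tmul_mul_tmul, hf, hg]
    | add u v hu hv => rw [mul_add, map_add, hu, hv, map_add, mul_add]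
  | add u v hu hv => rw [add_mul, map_add, hu, hv, map_add, add_mul]

private lemma assoc_mul (s t : (A ⊗[ℂ] A) ⊗[ℂ] A) :
    (TensorProduct.assoc ℂ A A A) (s * t)
      = (TensorProduct.assoc ℂ A A A) s * (TensorProduct.assoc ℂ A A A) t :=
  map_mul (Algebra.TensorProduct.assoc ℂ ℂ ℂ A A A) s t

variable (W : WeakHopfAlgebra A)

/-- `Π^L` as a linear map. -/
def PiL : A →ₗ[ℂ] A :=
  LinearMap.mul' ℂ A ∘ₗ TensorProduct.map LinearMap.id W.S ∘ₗ W.Δ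

/-- `Π^R` as a linear map. -/
def PiR : A →ₗ[ℂ] A :=
  LinearMap.mul' ℂ A ∘ₗ TensorProduct.map W.S LinearMap.id ∘ₗ W.Δ

lemma PiL_eq (x : A) : W.PiL x = W.swIdS x := rfl

lemma PiR_eq (x : A) : W.PiR x = W.swSId x := rfl

lemma Δ_one_mul (x : A) : W.Δ 1 * W.Δ x = W.Δ x := by rw [← W.Δ_mul, one_mul]

lemma Δ_mul_one (x : A) : W.Δ x * W.Δ 1 = W.Δ x := by rw [← W.Δ_mul, mul_one]

/-- `(id ⊗ Δ)(Δ 1)` via the first weak unit axiom. -/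
lemma mapidΔ_one' :
    (TensorProduct.map LinearMap.id W.Δ) (W.Δ 1)
      = (TensorProduct.assoc ℂ A A A) (W.Δ 1 ⊗ₜ[ℂ] (1 : A)) * ((1 : A) ⊗ₜ[ℂ] W.Δ 1) := by
  rw [← W.coassoc 1, ← W.unit_weak, assoc_mul, LinearEquiv.apply_symm_apply]

/-- `(id ⊗ Δ)(Δ 1)` via the second weak unit axiom. -/
lemma mapidΔ_one :
    (TensorProduct.map LinearMap.id W.Δ) (W.Δ 1)
      = ((1 : A) ⊗ₜ[ℂ] W.Δ 1) * (TensorProduct.assoc ℂ A A A) (W.Δ 1 ⊗ₜ[ℂ] (1 : A)) := by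
  rw [← W.coassoc 1, ← W.unit_weak', assoc_mul, LinearEquiv.apply_symm_apply]

/-- Counit evaluation on the middle leg. -/
def Kc : A ⊗[ℂ] (A ⊗[ℂ] A) →ₗ[ℂ] A ⊗[ℂ] A :=
  TensorProduct.map LinearMap.id
    ((TensorProduct.lid ℂ A).toLinearMap ∘ₗ TensorProduct.map W.ε LinearMap.id)

lemma Kc_mapidΔ (t : A ⊗[ℂ] A) :
    W.Kc ((TensorProduct.map LinearMap.id W.Δ) t) = t := by
  induction t using TensorProduct.induction_on with
  | zero => simp
  | tmul u v =>
    simp only [TensorProduct.map_tmul, LinearMap.id_coe, id_eq, Kc, LinearMap.coe_comp,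
      Function.comp_apply, LinearEquiv.coe_coe]
    exact congrArg (fun z => u ⊗ₜ[ℂ] z) (W.counit_left v)
  | add u v hu hv => simp only [map_add, hu, hv]

private lemma P2d_pure (u v : A) (s : A ⊗[ℂ] A) :
    W.Kc (((1 : A) ⊗ₜ[ℂ] (u ⊗ₜ[ℂ] v)) * (TensorProduct.assoc ℂ A A A) (s ⊗ₜ[ℂ] (1 : A)))
      = ((TensorProduct.rid ℂ A)
          ((TensorProduct.map LinearMap.id (W.ε ∘ₗ LinearMap.mulLeft ℂ u)) s)) ⊗ₜ[ℂ] v := by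
  induction s using TensorProduct.induction_on with
  | zero =>
    rw [TensorProduct.zero_tmul, (TensorProduct.assoc ℂ A A A).map_zero, mul_zero,
      W.Kc.map_zero, (TensorProduct.map LinearMap.id (W.ε ∘ₗ LinearMap.mulLeft ℂ u)).map_zero,
      (TensorProduct.rid ℂ A).map_zero, TensorProduct.zero_tmul]
  | tmul a b =>
    simp only [TensorProduct.assoc_tmul, Algebra.TensorProduct.tmul_mul_tmul, one_mul, mul_one,
      Kc, TensorProduct.map_tmul, LinearMap.id_coe, id_eq, LinearMap.coe_comp,
      Function.comp_apply, LinearEquiv.coe_coe, TensorProduct.lid_tmul,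
      TensorProduct.rid_tmul, LinearMap.mulLeft_apply]
    rw [TensorProduct.tmul_smul, TensorProduct.smul_tmul']
  | add s₁ s₂ h₁ h₂ =>
    simp only [TensorProduct.add_tmul, map_add, mul_add, h₁, h₂]

/-- BNS identity `(Π^R ⊗ id)(Δ y) = (1 ⊗ y)·Δ(1)` (pre-evaluated form). -/
lemma mapPiR_id (t : A ⊗[ℂ] A) :
    (TensorProduct.map W.PiR LinearMap.id) t
      = W.Kc (((1 : A) ⊗ₜ[ℂ] t) * (TensorProduct.assoc ℂ A A A) (W.Δ 1 ⊗ₜ[ℂ] (1 : A))) := by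
  induction t using TensorProduct.induction_on with
  | zero => simp
  | tmul u v =>
    rw [W.P2d_pure u v (W.Δ 1), TensorProduct.map_tmul]
    rw [show W.PiR u = (TensorProduct.rid ℂ A)
      ((TensorProduct.map LinearMap.id (W.ε ∘ₗ LinearMap.mulLeft ℂ u)) (W.Δ 1)) from
      W.antipode_left u]
    rfl
  | add u v hu hv =>
    simp only [map_add, TensorProduct.tmul_add, add_mul, hu, hv]

/-- BNS identity `(Π^R ⊗ id)(Δ y) = (1 ⊗ y)·Δ(1)`. -/
lemma mapPiR_Δ (y : A) :
    (TensorProduct.map W.PiR LinearMap.id) (W.Δ y) = ((1 : A) ⊗ₜ[ℂ] y) * W.Δ 1 := by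
  rw [W.mapPiR_id]
  have h1 : ((1 : A) ⊗ₜ[ℂ] W.Δ y) * (TensorProduct.assoc ℂ A A A) (W.Δ 1 ⊗ₜ[ℂ] (1 : A))
      = (TensorProduct.map LinearMap.id W.Δ) (((1 : A) ⊗ₜ[ℂ] y) * W.Δ 1) := by
    rw [map_mul_of _ _ (fun _ _ => rfl) W.Δ_mul, TensorProduct.map_tmul, W.mapidΔ_one,
      ← mul_assoc, Algebra.TensorProduct.tmul_mul_tmul]
    simp only [LinearMap.id_apply, one_mul, W.Δ_mul_one]
  rw [h1, W.Kc_mapidΔ]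

/-- `Δ(Π^L(x)) = (Π^L(x) ⊗ 1)·Δ(1)`. -/
lemma Δ_PiL (x : A) : W.Δ (W.PiL x) = (W.PiL x ⊗ₜ[ℂ] (1 : A)) * W.Δ 1 := by
  set φx := W.ε ∘ₗ LinearMap.mulRight ℂ x with hφx
  have hπ : W.PiL x = (TensorProduct.lid ℂ A)
      ((TensorProduct.map φx LinearMap.id) (W.Δ 1)) := W.antipode_right x
  set Jx : A ⊗[ℂ] (A ⊗[ℂ] A) →ₗ[ℂ] A ⊗[ℂ] A :=
    (TensorProduct.lid ℂ (A ⊗[ℂ] A)).toLinearMap ∘ₗ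
      TensorProduct.map φx LinearMap.id with hJx
  have hPLa : ∀ t : A ⊗[ℂ] A,
      W.Δ ((TensorProduct.lid ℂ A) ((TensorProduct.map φx LinearMap.id) t))
        = Jx ((TensorProduct.map LinearMap.id W.Δ) t) := by
    intro t
    induction t using TensorProduct.induction_on with
    | zero => simp
    | tmul a b =>
      simp [hJx, TensorProduct.lid_tmul, map_smul]
    | add u v hu hv => simp only [map_add, hu, hv]
  have hPLb : ∀ s t : A ⊗[ℂ] A,
      Jx ((TensorProduct.assoc ℂ A A A) (s ⊗ₜ[ℂ] (1 : A)) * ((1 : A) ⊗ₜ[ℂ] t))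
        = ((TensorProduct.lid ℂ A) ((TensorProduct.map φx LinearMap.id) s) ⊗ₜ[ℂ] (1 : A)) * t := by
    intro s t
    induction s using TensorProduct.induction_on with
    | zero =>
      rw [TensorProduct.zero_tmul, (TensorProduct.assoc ℂ A A A).map_zero, zero_mul,
        Jx.map_zero, (TensorProduct.map φx LinearMap.id).map_zero,
        (TensorProduct.lid ℂ A).map_zero, TensorProduct.zero_tmul, zero_mul]
    | tmul a b =>
      induction t using TensorProduct.induction_on with
      | zero => simp
      | tmul c d =>
        simp only [TensorProduct.assoc_tmul, Algebra.TensorProduct.tmul_mul_tmul, one_mul,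
          mul_one, hJx, LinearMap.coe_comp, Function.comp_apply, LinearEquiv.coe_coe,
          TensorProduct.map_tmul, LinearMap.id_coe, id_eq, TensorProduct.lid_tmul,
          TensorProduct.smul_tmul', smul_mul_assoc]
      | add t₁ t₂ h₁ h₂ =>
        simp only [TensorProduct.tmul_add, mul_add, map_add, h₁, h₂]
    | add s₁ s₂ h₁ h₂ =>
      simp only [TensorProduct.add_tmul, map_add, add_mul, h₁, h₂]
  rw [hπ, hPLa, W.mapidΔ_one', hPLb, ← hπ]

/-- `u ⊗ t ↦ (S u ⊗ 1) * t`. -/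
def nu' : A ⊗[ℂ] (A ⊗[ℂ] A) →ₗ[ℂ] A ⊗[ℂ] A :=
  TensorProduct.lift
    (LinearMap.mul ℂ (A ⊗[ℂ] A) ∘ₗ (TensorProduct.mk ℂ A A).flip (1 : A) ∘ₗ W.S)

lemma nu'_tmul (u : A) (t : A ⊗[ℂ] A) :
    W.nu' (u ⊗ₜ[ℂ] t) = (W.S u ⊗ₜ[ℂ] (1 : A)) * t := rfl

/-- regrouping: `Σ (S a₁ ⊗ 1)·Δ(a₂) = (Π^R ⊗ id)(Δ a)`. -/
lemma reg1 (a : A) :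
    W.nu' ((TensorProduct.map LinearMap.id W.Δ) (W.Δ a))
      = (TensorProduct.map W.PiR LinearMap.id) (W.Δ a) := by
  have h2 : (TensorProduct.map W.PiR LinearMap.id : A ⊗[ℂ] A →ₗ[ℂ] A ⊗[ℂ] A)
      = TensorProduct.map (LinearMap.mul' ℂ A ∘ₗ TensorProduct.map W.S LinearMap.id)
          LinearMap.id ∘ₗ TensorProduct.map W.Δ LinearMap.id := by
    rw [← TensorProduct.map_comp]; rfl
  rw [← W.coassoc a, h2, LinearMap.comp_apply]
  generalize (TensorProduct.map W.Δ LinearMap.id) (W.Δ a) = t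
  induction t using TensorProduct.induction_on with
  | zero =>
    rw [(TensorProduct.assoc ℂ A A A).map_zero]
    simp only [map_zero]
  | tmul s c =>
    induction s using TensorProduct.induction_on with
    | zero =>
      rw [TensorProduct.zero_tmul, (TensorProduct.assoc ℂ A A A).map_zero]
      simp only [map_zero]
    | tmul u v =>
      simp only [TensorProduct.assoc_tmul, nu'_tmul, Algebra.TensorProduct.tmul_mul_tmul,
        one_mul, LinearMap.coe_comp, Function.comp_apply, TensorProduct.map_tmul,
        LinearMap.id_coe, id_eq, LinearMap.mul'_apply]
    | add s₁ s₂ h₁ h₂ =>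
      simp only [TensorProduct.add_tmul, map_add, h₁, h₂]
  | add t₁ t₂ h₁ h₂ => simp only [map_add, h₁, h₂]

/-- `Σ S(x₁)·Π^L(x₂) = S(x)` (a form of the middle antipode axiom). -/
lemma mid' (x : A) :
    LinearMap.mul' ℂ A ((TensorProduct.map W.S W.PiL) (W.Δ x)) = W.S x := by
  have h2 : (TensorProduct.map W.S W.PiL : A ⊗[ℂ] A →ₗ[ℂ] A ⊗[ℂ] A)
      = TensorProduct.map W.S (LinearMap.mul' ℂ A ∘ₗ TensorProduct.map LinearMap.id W.S)
          ∘ₗ TensorProduct.map LinearMap.id W.Δ := by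
    rw [← TensorProduct.map_comp]; rfl
  rw [h2, LinearMap.comp_apply, ← W.coassoc x, ← W.antipode_mid x]
  generalize (TensorProduct.map W.Δ LinearMap.id) (W.Δ x) = t
  induction t using TensorProduct.induction_on with
  | zero =>
    rw [(TensorProduct.assoc ℂ A A A).map_zero]
    simp only [map_zero]
  | tmul s c =>
    induction s using TensorProduct.induction_on with
    | zero =>
      rw [TensorProduct.zero_tmul, (TensorProduct.assoc ℂ A A A).map_zero]
      simp only [map_zero]
    | tmul u v =>
      simp only [TensorProduct.assoc_tmul, TensorProduct.map_tmul, LinearMap.coe_comp,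
        Function.comp_apply, LinearMap.id_coe, id_eq, LinearMap.mul'_apply, mul_assoc]
    | add s₁ s₂ h₁ h₂ =>
      simp only [TensorProduct.add_tmul, map_add, h₁, h₂]
  | add t₁ t₂ h₁ h₂ => simp only [map_add, h₁, h₂]

/-- Every left integral satisfies `l = h·l` for a normalized Haar integral `h`. -/
lemma left_integral_eq_haar_mul {h l : A} (hh : W.IsHaar h) (hl : W.IsLeftIntegral l) :
    l = h * l := by
  have e1 : (LinearMap.mulRight ℂ l ∘ₗ LinearMap.mul' ℂ A ∘ₗ TensorProduct.map W.S LinearMap.id)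
      = (LinearMap.mulRight ℂ l ∘ₗ LinearMap.mul' ℂ A ∘ₗ TensorProduct.map W.S W.PiL) := by
    apply TensorProduct.ext'
    intro u v
    simp only [LinearMap.coe_comp, Function.comp_apply, TensorProduct.map_tmul,
      LinearMap.id_coe, id_eq, LinearMap.mul'_apply, LinearMap.mulRight_apply]
    rw [mul_assoc, mul_assoc, hl v]
    rfl
  calc l = W.swSId h * l := by rw [hh.2.2.1, one_mul]
    _ = (LinearMap.mulRight ℂ l ∘ₗ LinearMap.mul' ℂ A ∘ₗ
          TensorProduct.map W.S LinearMap.id) (W.Δ h) := rfl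
    _ = (LinearMap.mulRight ℂ l ∘ₗ LinearMap.mul' ℂ A ∘ₗ
          TensorProduct.map W.S W.PiL) (W.Δ h) := by rw [e1]
    _ = LinearMap.mul' ℂ A ((TensorProduct.map W.S W.PiL) (W.Δ h)) * l := rfl
    _ = W.S h * l := by rw [W.mid']
    _ = h * l := by rw [hh.2.2.2.2]

/-- Strong invariance for left integrals: `(1 ⊗ a)·Δl = (S(a) ⊗ 1)·Δl`. -/
lemma strong_left {l : A} (hl : W.IsLeftIntegral l) (a : A) :
    ((1 : A) ⊗ₜ[ℂ] a) * W.Δ l = (W.S a ⊗ₜ[ℂ] (1 : A)) * W.Δ l := by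
  set Φ : A ⊗[ℂ] A →ₗ[ℂ] A ⊗[ℂ] A :=
    W.nu' ∘ₗ TensorProduct.map LinearMap.id (W.Δ ∘ₗ LinearMap.mulRight ℂ l) with hΦdef
  have hΦ1 : Φ = LinearMap.mulRight ℂ (W.Δ l) ∘ₗ W.nu' ∘ₗ
      TensorProduct.map LinearMap.id W.Δ := by
    apply TensorProduct.ext'
    intro u v
    simp only [hΦdef, LinearMap.coe_comp, Function.comp_apply, TensorProduct.map_tmul,
      LinearMap.id_coe, id_eq, LinearMap.mulRight_apply, nu'_tmul]
    rw [W.Δ_mul, mul_assoc]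
  have hΦ2 : Φ = LinearMap.mulRight ℂ (W.Δ l) ∘ₗ (TensorProduct.mk ℂ A A).flip (1 : A) ∘ₗ
      LinearMap.mul' ℂ A ∘ₗ TensorProduct.map W.S W.PiL := by
    apply TensorProduct.ext'
    intro u v
    simp only [hΦdef, LinearMap.coe_comp, Function.comp_apply, TensorProduct.map_tmul,
      LinearMap.id_coe, id_eq, LinearMap.mulRight_apply, nu'_tmul, LinearMap.mul'_apply,
      LinearMap.flip_apply, TensorProduct.mk_apply]
    rw [hl v, ← W.PiL_eq, W.Δ_mul, W.Δ_PiL, ← mul_assoc, ← mul_assoc,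
      Algebra.TensorProduct.tmul_mul_tmul, mul_one, mul_assoc, W.Δ_one_mul]
  have e1 : Φ (W.Δ a) = ((1 : A) ⊗ₜ[ℂ] a) * W.Δ l := by
    rw [hΦ1]
    simp only [LinearMap.coe_comp, Function.comp_apply, LinearMap.mulRight_apply]
    rw [W.reg1, W.mapPiR_Δ, mul_assoc, W.Δ_one_mul]
  have e2 : Φ (W.Δ a) = (W.S a ⊗ₜ[ℂ] (1 : A)) * W.Δ l := by
    rw [hΦ2]
    simp only [LinearMap.coe_comp, Function.comp_apply, LinearMap.mulRight_apply,
      LinearMap.flip_apply, TensorProduct.mk_apply]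
    rw [W.mid']
  rw [← e1, e2]

/-- The flip-antipode map `u ⊗ v ↦ S v ⊗ S u`. -/
def Ψm : A ⊗[ℂ] A →ₗ[ℂ] A ⊗[ℂ] A :=
  (TensorProduct.comm ℂ A A).toLinearMap ∘ₗ TensorProduct.map W.S W.S

lemma Ψm_tmul (u v : A) : W.Ψm (u ⊗ₜ[ℂ] v) = W.S v ⊗ₜ[ℂ] W.S u := rfl

lemma Ψm_mul (s t : A ⊗[ℂ] A) : W.Ψm (s * t) = W.Ψm t * W.Ψm s := by
  induction s using TensorProduct.induction_on with
  | zero => simp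
  | tmul a b =>
    induction t using TensorProduct.induction_on with
    | zero => simp
    | tmul c d =>
      simp only [Algebra.TensorProduct.tmul_mul_tmul, Ψm_tmul, W.S_antimul]
    | add u v hu hv => rw [mul_add, map_add, hu, hv, map_add, add_mul]
  | add u v hu hv => rw [add_mul, map_add, hu, hv, map_add, mul_add]

lemma Ψm_Δ (x : A) : W.Ψm (W.Δ x) = W.Δ (W.S x) := (W.S_anticomul x).symm

lemma S_one : W.S 1 = 1 := by
  have h2 : TensorProduct.map (LinearMap.mul' ℂ A ∘ₗ TensorProduct.map W.S LinearMap.id) W.S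
      ∘ₗ TensorProduct.map W.Δ LinearMap.id = TensorProduct.map W.PiR W.S := by
    rw [← TensorProduct.map_comp]; rfl
  have h3 := W.antipode_mid 1
  have h2' := LinearMap.congr_fun h2 (W.Δ 1)
  simp only [LinearMap.comp_apply] at h2'
  rw [h2'] at h3
  have h4 : TensorProduct.map LinearMap.id W.S ∘ₗ TensorProduct.map W.PiR LinearMap.id
      = TensorProduct.map W.PiR W.S := by
    rw [← TensorProduct.map_comp]
    rfl
  have h4' := LinearMap.congr_fun h4 (W.Δ 1)
  simp only [LinearMap.comp_apply] at h4'
  rw [← h4', W.mapPiR_Δ 1, ← Algebra.TensorProduct.one_def, one_mul] at h3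
  have h5 : W.swIdS 1 = 1 := by
    have h6 := W.antipode_right 1
    rw [LinearMap.mulRight_one] at h6
    have h7 : W.ε ∘ₗ (LinearMap.id : A →ₗ[ℂ] A) = W.ε := rfl
    rw [h7] at h6
    show LinearMap.mul' ℂ A ((TensorProduct.map LinearMap.id W.S) (W.Δ 1)) = 1
    rw [h6]
    exact W.counit_left 1
  have h8 : LinearMap.mul' ℂ A ((TensorProduct.map LinearMap.id W.S) (W.Δ 1)) = W.swIdS 1 := rfl
  rw [← h3, h8, h5]

/-- Strong invariance on the right for the Haar integral:
`Δh·(a ⊗ 1) = Δh·(1 ⊗ S a)`. -/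
lemma strong_right_haar {h : A} (hh : W.IsHaar h) (a : A) :
    W.Δ h * (a ⊗ₜ[ℂ] (1 : A)) = W.Δ h * ((1 : A) ⊗ₜ[ℂ] W.S a) := by
  have e := congrArg W.Ψm (W.strong_left hh.1 (W.Sinv a))
  rw [W.Ψm_mul, W.Ψm_mul, W.Ψm_Δ, hh.2.2.2.2, W.Ψm_tmul, W.Ψm_tmul, W.S_one,
    W.S_Sinv a] at e
  exact e

/-- For a left integral `l`: `Δ l = Δ h · (1 ⊗ d_R(l))`. -/
lemma Δl_haar {h l : A} (hh : W.IsHaar h) (hl : W.IsLeftIntegral l) :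
    W.Δ l = W.Δ h * ((1 : A) ⊗ₜ[ℂ] W.swSId l) := by
  have e0 : W.Δ l = W.Δ h * W.Δ l := by
    conv_lhs => rw [W.left_integral_eq_haar_mul hh hl, W.Δ_mul]
  have e1 : (LinearMap.mulLeft ℂ (W.Δ h))
      = LinearMap.mulLeft ℂ (W.Δ h) ∘ₗ TensorProduct.mk ℂ A A (1 : A) ∘ₗ
          LinearMap.mul' ℂ A ∘ₗ TensorProduct.map W.S LinearMap.id := by
    apply TensorProduct.ext'
    intro u v
    simp only [LinearMap.coe_comp, Function.comp_apply, LinearMap.mulLeft_apply,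
      TensorProduct.map_tmul, LinearMap.id_coe, id_eq, LinearMap.mul'_apply,
      TensorProduct.mk_apply]
    have : (u ⊗ₜ[ℂ] v : A ⊗[ℂ] A) = (u ⊗ₜ[ℂ] (1 : A)) * ((1 : A) ⊗ₜ[ℂ] v) := by
      rw [Algebra.TensorProduct.tmul_mul_tmul, mul_one, one_mul]
    rw [this, ← mul_assoc, W.strong_right_haar hh u, mul_assoc,
      Algebra.TensorProduct.tmul_mul_tmul, one_mul]
  calc W.Δ l = W.Δ h * W.Δ l := e0
    _ = (LinearMap.mulLeft ℂ (W.Δ h)) (W.Δ l) := rfl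
    _ = (LinearMap.mulLeft ℂ (W.Δ h) ∘ₗ TensorProduct.mk ℂ A A (1 : A) ∘ₗ
          LinearMap.mul' ℂ A ∘ₗ TensorProduct.map W.S LinearMap.id) (W.Δ l) := by rw [← e1]
    _ = W.Δ h * ((1 : A) ⊗ₜ[ℂ] W.swSId l) := rfl

lemma map_pair_mulright (φ ψ : A →ₗ[ℂ] ℂ) (c g : A) (t : A ⊗[ℂ] A) :
    (TensorProduct.map φ ψ) (t * (c ⊗ₜ[ℂ] g))
      = (TensorProduct.map (φ ∘ₗ LinearMap.mulRight ℂ c) (ψ ∘ₗ LinearMap.mulRight ℂ g)) t := by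
  induction t using TensorProduct.induction_on with
  | zero => simp
  | tmul u v =>
    simp only [Algebra.TensorProduct.tmul_mul_tmul, TensorProduct.map_tmul,
      LinearMap.coe_comp, Function.comp_apply, LinearMap.mulRight_apply]
  | add u v hu hv => rw [add_mul, map_add, hu, hv, map_add]

/-- The functional `u ↦ conj(ξ(star(S u)))`. -/
def starF (ξ : A →ₗ[ℂ] ℂ) : A →ₗ[ℂ] ℂ where
  toFun u := starRingEnd ℂ (ξ (star (W.S u)))
  map_add' u v := by
    show starRingEnd ℂ (ξ (star (W.S (u + v)))) = _
    rw [map_add, star_add, map_add, map_add]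
  map_smul' c u := by
    show starRingEnd ℂ (ξ (star (W.S (c • u)))) = _
    rw [map_smul, star_smul, map_smul, smul_eq_mul, map_mul, RingHom.id_apply, smul_eq_mul]
    congr 1
    rw [Complex.star_def, Complex.conj_conj]

lemma starF_apply (ξ : A →ₗ[ℂ] ℂ) (u : A) :
    W.starF ξ u = starRingEnd ℂ (ξ (star (W.S u))) := rfl

lemma conj_starF (ξ : A →ₗ[ℂ] ℂ) (u : A) :
    starRingEnd ℂ ((W.starF ξ) (star (W.S u))) = ξ u := by
  rw [starF_apply, Complex.conj_conj, W.S_star (W.S u), W.Sinv_S]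

/-- Expansion of `Σ S(t₍₁₎)·t₍₂₎` in terms of matrix coefficients. -/
lemma star_basis_expand {n : ℕ} (b : Module.Basis (Fin n) ℂ A) (t : A ⊗[ℂ] A) :
    LinearMap.mul' ℂ A ((TensorProduct.map W.S LinearMap.id) t)
      = ∑ i, ∑ j, (TensorProduct.lid ℂ ℂ)
          ((TensorProduct.map (W.starF (b.coord i)) (b.coord j)) t)
            • (star (b i) * b j) := by
  induction t using TensorProduct.induction_on with
  | zero => simp
  | tmul u v =>
    have e1 : ∀ i j : Fin n,
        (TensorProduct.lid ℂ ℂ) ((TensorProduct.map (W.starF (b.coord i)) (b.coord j))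
          (u ⊗ₜ[ℂ] v)) • (star (b i) * b j)
        = ((W.starF (b.coord i)) u • star (b i)) * ((b.coord j) v • b j) := by
      intro i j
      rw [TensorProduct.map_tmul, TensorProduct.lid_tmul, smul_eq_mul,
        smul_mul_smul_comm]
    simp only [e1]
    rw [← Finset.sum_mul_sum]
    have e2 : (∑ j, (b.coord j) v • b j) = v := by
      simp only [Module.Basis.coord_apply]
      exact b.sum_repr v
    have e3 : (∑ i, (W.starF (b.coord i)) u • star (b i)) = W.S u := by
      have e4 : ∀ i : Fin n, (W.starF (b.coord i)) u • star (b i)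
          = star ((b.coord i) (star (W.S u)) • b i) := by
        intro i
        rw [star_smul, starF_apply, Complex.star_def]
      simp only [e4]
      rw [← star_sum]
      simp only [Module.Basis.coord_apply]
      rw [b.sum_repr, star_star]
    rw [e2, e3, TensorProduct.map_tmul, LinearMap.mul'_apply]
    rfl
  | add s₁ s₂ h₁ h₂ =>
    simp only [map_add, add_smul, h₁, h₂, Finset.sum_add_distrib]

private lemma pair_expand {n : ℕ} (F G : Fin n → (A →ₗ[ℂ] ℂ)) (c d : Fin n → ℂ)
    (t : A ⊗[ℂ] A) :
    (TensorProduct.lid ℂ ℂ) ((TensorProduct.map (∑ i, c i • F i) (∑ j, d j • G j)) t)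
      = ∑ i, ∑ j, c i * d j *
          (TensorProduct.lid ℂ ℂ) ((TensorProduct.map (F i) (G j)) t) := by
  induction t using TensorProduct.induction_on with
  | zero => simp
  | tmul u v =>
    simp only [TensorProduct.map_tmul, TensorProduct.lid_tmul, LinearMap.sum_apply,
      LinearMap.smul_apply, smul_eq_mul]
    rw [Finset.sum_mul_sum]
    refine Finset.sum_congr rfl fun i _ => Finset.sum_congr rfl fun j _ => by ring
  | add s₁ s₂ h₁ h₂ =>
    simp only [map_add, h₁, h₂, ← Finset.sum_add_distrib, mul_add]

private lemma sum_single_pair {n : ℕ} (g : Fin n → ℂ) (i j : Fin n) (a c : ℂ) (hij : i ≠ j) :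
    (∑ k, (Pi.single i a + Pi.single j c : Fin n → ℂ) k * g k) = a * g i + c * g j := by
  have e : ∀ k, (Pi.single i a + Pi.single j c : Fin n → ℂ) k * g k
      = (if k = i then a * g i else 0) + (if k = j then c * g j else 0) := by
    intro k
    rw [Pi.add_apply, Pi.single_apply, Pi.single_apply]
    by_cases h1 : k = i <;> by_cases h2 : k = j
    · exact absurd (h1.symm.trans h2) hij
    · simp [h1, h2, if_neg hij]
    · simp [h1, h2, if_neg (Ne.symm hij)]
    · simp [h1, h2]
  rw [Finset.sum_congr rfl fun k _ => e k, Finset.sum_add_distrib,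
    Finset.sum_ite_eq' Finset.univ i fun _ => a * g i,
    Finset.sum_ite_eq' Finset.univ j fun _ => c * g j]
  simp

open scoped ComplexOrder MatrixOrder in
private lemma psd_decomp {n : ℕ} (M : Matrix (Fin n) (Fin n) ℂ)
    (hquad : ∀ c : Fin n → ℂ, ∃ r : ℝ, 0 ≤ r ∧
      (∑ i, ∑ j, c i * starRingEnd ℂ (c j) * M i j) = (r : ℂ)) :
    ∃ Bm : Matrix (Fin n) (Fin n) ℂ,
      ∀ i j, M i j = ∑ k, Bm k i * starRingEnd ℂ (Bm k j) := by
  classical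
  set Dm : Fin n → Fin n → ℂ := fun i j => M i j - starRingEnd ℂ (M j i) with hDm
  have hdiff : ∀ c : Fin n → ℂ,
      (∑ i, ∑ j, c i * starRingEnd ℂ (c j) * Dm i j) = 0 := by
    intro c
    have hreal : starRingEnd ℂ (∑ i, ∑ j, c i * starRingEnd ℂ (c j) * M i j)
        = ∑ i, ∑ j, c i * starRingEnd ℂ (c j) * M i j := by
      obtain ⟨r, _, hrv⟩ := hquad c
      rw [hrv, Complex.conj_ofReal]
    have hconjsum : starRingEnd ℂ (∑ i, ∑ j, c i * starRingEnd ℂ (c j) * M i j)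
        = ∑ i, ∑ j, c i * starRingEnd ℂ (c j) * starRingEnd ℂ (M j i) := by
      simp only [map_sum, map_mul, Complex.conj_conj]
      rw [Finset.sum_comm]
      exact Finset.sum_congr rfl fun i _ => Finset.sum_congr rfl fun j _ => by ring
    have e := hconjsum.symm.trans hreal
    simp only [hDm, mul_sub, Finset.sum_sub_distrib]
    rw [sub_eq_zero]
    exact e.symm
  have sum_single1 : ∀ (g : Fin n → ℂ) (i : Fin n) (a : ℂ),
      (∑ k, (Pi.single i a : Fin n → ℂ) k * g k) = a * g i := by
    intro g i a
    have e : ∀ k, (Pi.single i a : Fin n → ℂ) k * g k = if k = i then a * g i else 0 := by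
      intro k
      rw [Pi.single_apply]
      by_cases hk : k = i <;> simp [hk]
    rw [Finset.sum_congr rfl fun k _ => e k,
      Finset.sum_ite_eq' Finset.univ i fun _ => a * g i]
    simp
  have conj_single : ∀ (i : Fin n) (a : ℂ) (l : Fin n),
      starRingEnd ℂ ((Pi.single i a : Fin n → ℂ) l)
        = (Pi.single i (starRingEnd ℂ a) : Fin n → ℂ) l := by
    intro i a l
    rw [Pi.single_apply, Pi.single_apply]
    split <;> simp
  have hDdiag : ∀ i, Dm i i = 0 := by
    intro i
    have h0 := hdiff (Pi.single i 1)
    have e1 : ∀ k, (∑ l, (Pi.single i (1 : ℂ) : Fin n → ℂ) k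
        * starRingEnd ℂ ((Pi.single i (1 : ℂ) : Fin n → ℂ) l) * Dm k l)
        = (Pi.single i (1 : ℂ) : Fin n → ℂ) k * Dm k i := by
      intro k
      simp only [mul_assoc, ← Finset.mul_sum]
      congr 1
      rw [Finset.sum_congr rfl fun l _ => by rw [conj_single i 1 l],
        sum_single1 (fun l => Dm k l) i (starRingEnd ℂ 1)]
      simp
    rw [Finset.sum_congr rfl fun k _ => e1 k, sum_single1 (fun k => Dm k i) i 1,
      one_mul] at h0
    exact h0
  have evalpair : ∀ (i j : Fin n) (a c : ℂ), i ≠ j →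
      (∑ k, ∑ l, (Pi.single i a + Pi.single j c : Fin n → ℂ) k
          * starRingEnd ℂ ((Pi.single i a + Pi.single j c : Fin n → ℂ) l) * Dm k l)
        = a * (starRingEnd ℂ a * Dm i i + starRingEnd ℂ c * Dm i j)
          + c * (starRingEnd ℂ a * Dm j i + starRingEnd ℂ c * Dm j j) := by
    intro i j a c hij
    have einner : ∀ k, (∑ l, (Pi.single i a + Pi.single j c : Fin n → ℂ) k
        * starRingEnd ℂ ((Pi.single i a + Pi.single j c : Fin n → ℂ) l) * Dm k l)
        = (Pi.single i a + Pi.single j c : Fin n → ℂ) k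
            * (starRingEnd ℂ a * Dm k i + starRingEnd ℂ c * Dm k j) := by
      intro k
      simp only [mul_assoc, ← Finset.mul_sum]
      congr 1
      have econj : ∀ l, starRingEnd ℂ ((Pi.single i a + Pi.single j c : Fin n → ℂ) l)
          = (Pi.single i (starRingEnd ℂ a) + Pi.single j (starRingEnd ℂ c) : Fin n → ℂ) l := by
        intro l
        rw [Pi.add_apply, map_add, conj_single, conj_single, Pi.add_apply]
      rw [Finset.sum_congr rfl fun l _ => by rw [econj l]]
      exact WeakHopfAlgebra.sum_single_pair (fun l => Dm k l) i j _ _ hij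
    rw [Finset.sum_congr rfl fun k _ => einner k]
    exact WeakHopfAlgebra.sum_single_pair
      (fun k => starRingEnd ℂ a * Dm k i + starRingEnd ℂ c * Dm k j) i j a c hij
  have hDzero : ∀ i j, Dm i j = 0 := by
    intro i j
    by_cases hij : i = j
    · subst hij; exact hDdiag i
    · have e2 := hdiff (Pi.single i 1 + Pi.single j 1)
      rw [evalpair i j 1 1 hij, hDdiag i, hDdiag j] at e2
      have e3 := hdiff (Pi.single i 1 + Pi.single j Complex.I)
      rw [evalpair i j 1 Complex.I hij, hDdiag i, hDdiag j] at e3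
      simp only [map_one, Complex.conj_I, one_mul, mul_zero, mul_one, add_zero,
        zero_add, mul_neg, neg_mul] at e2 e3
      have e4 : Dm j i = -Dm i j := by linear_combination e2
      rw [e4] at e3
      have e5 : (-2 * Complex.I) * Dm i j = 0 := by linear_combination e3
      rcases mul_eq_zero.mp e5 with h5 | h5
      · exfalso
        have : (Complex.I : ℂ) ≠ 0 := Complex.I_ne_zero
        simp only [mul_eq_zero, neg_eq_zero] at h5
        rcases h5 with h6 | h6
        · norm_num at h6
        · exact this h6
      · exact h5
  have hermM : ∀ i j, starRingEnd ℂ (M j i) = M i j := by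
    intro i j
    have h0 : M i j - starRingEnd ℂ (M j i) = 0 := hDzero i j
    linear_combination -h0
  have hPSD : Matrix.PosSemidef (Matrix.of fun j i => M i j) := by
    rw [Matrix.posSemidef_iff_dotProduct_mulVec]
    constructor
    · show Matrix.conjTranspose _ = _
      ext i j
      rw [Matrix.conjTranspose_apply, Matrix.of_apply, Matrix.of_apply]
      exact hermM j i
    · intro x
      obtain ⟨r, hr0, hrv⟩ := hquad x
      have hdot : dotProduct (star x) (Matrix.mulVec (Matrix.of fun j i => M i j) x)
          = ∑ i, ∑ j, x i * starRingEnd ℂ (x j) * M i j := by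
        simp only [dotProduct, Matrix.mulVec, Matrix.of_apply, Pi.star_apply,
          Finset.mul_sum, RCLike.star_def]
        rw [Finset.sum_comm]
        exact Finset.sum_congr rfl fun i _ => Finset.sum_congr rfl fun j _ => by ring
      rw [hdot, hrv]
      exact Complex.zero_le_real.mpr hr0
  obtain ⟨Bm, hBm⟩ := CStarAlgebra.nonneg_iff_eq_star_mul_self.mp hPSD.nonneg
  rw [Matrix.star_eq_conjTranspose] at hBm
  refine ⟨Bm, fun i j => ?_⟩
  have hentry := congrFun (congrFun hBm j) i
  rw [Matrix.of_apply, Matrix.mul_apply] at hentry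
  rw [hentry]
  refine Finset.sum_congr rfl fun k _ => ?_
  rw [Matrix.conjTranspose_apply, RCLike.star_def]
  ring

end WeakHopfAlgebra

end AuxWHA

/-- Proposition 2.25 (i) of [NSW]: assuming the normalized Haar integral `h`
is a positive functional on the dual, a left integral `l` is a positive
functional on the dual if and only if `d_R(l) = Σ S(l₍₁₎)·l₍₂₎` is a positive
element of `A`. -/
theorem positive_left_integral_iff_dR_positive
    {A : Type} [Ring A] [Algebra ℂ A] [StarRing A] [StarModule ℂ A]
    (W : WeakHopfAlgebra A) (h : A) (hh : W.IsHaar h)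
    (hpos : IsPositiveFunctionalOnDual W h)
    (l : A) (hl : W.IsLeftIntegral l) :
    IsPositiveFunctionalOnDual W l ↔ IsPositiveElem (W.swSId l) := by
  haveI : FiniteDimensional ℂ A := W.finite
  classical
  constructor
  · -- positive functional on the dual ⇒ `d_R(l)` positive
    intro hposl
    set n := Module.finrank ℂ A with hn
    set b : Module.Basis (Fin n) ℂ A := Module.finBasis ℂ A with hb
    set M : Matrix (Fin n) (Fin n) ℂ := Matrix.of fun i j =>
      (TensorProduct.lid ℂ ℂ)
        ((TensorProduct.map (W.starF (b.coord i)) (b.coord j)) (W.Δ l)) with hM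
    have hquad : ∀ c : Fin n → ℂ, ∃ r : ℝ, 0 ≤ r ∧
        (∑ i, ∑ j, c i * starRingEnd ℂ (c j) * M i j) = (r : ℂ) := by
      intro c
      have hcond : ∀ u : A,
          (∑ j, starRingEnd ℂ (c j) • b.coord j : A →ₗ[ℂ] ℂ) u
            = starRingEnd ℂ
                ((∑ i, c i • W.starF (b.coord i) : A →ₗ[ℂ] ℂ) (star (W.S u))) := by
        intro u
        simp only [LinearMap.sum_apply, LinearMap.smul_apply, smul_eq_mul, map_sum, map_mul]
        exact Finset.sum_congr rfl fun i _ => by rw [W.conj_starF]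
      obtain ⟨r, hr0, hrv⟩ := hposl _ _ hcond
      refine ⟨r, hr0, ?_⟩
      rw [← hrv, WeakHopfAlgebra.pair_expand]
      rfl
    obtain ⟨Bm, hBm⟩ := WeakHopfAlgebra.psd_decomp M hquad
    refine ⟨n, fun k => ∑ j, starRingEnd ℂ (Bm k j) • b j, ?_⟩
    have hswsid : W.swSId l = ∑ i, ∑ j, M i j • (star (b i) * b j) :=
      W.star_basis_expand b (W.Δ l)
    rw [hswsid]
    have hterm : ∀ k : Fin n,
        star (∑ j, starRingEnd ℂ (Bm k j) • b j) * (∑ j, starRingEnd ℂ (Bm k j) • b j)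
          = ∑ i, ∑ j, (Bm k i * starRingEnd ℂ (Bm k j)) • (star (b i) * b j) := by
      intro k
      rw [star_sum, Finset.sum_mul_sum]
      refine Finset.sum_congr rfl fun i _ => Finset.sum_congr rfl fun j _ => ?_
      rw [star_smul, Complex.star_def, Complex.conj_conj, smul_mul_smul_comm]
    have hRHS : (∑ k, ∑ i, ∑ j, (Bm k i * starRingEnd ℂ (Bm k j)) • (star (b i) * b j))
        = ∑ i, ∑ j, M i j • (star (b i) * b j) := by
      rw [Finset.sum_comm]
      refine Finset.sum_congr rfl fun i _ => ?_
      rw [Finset.sum_comm]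
      refine Finset.sum_congr rfl fun j _ => ?_
      rw [← Finset.sum_smul, ← hBm i j]
    rw [← hRHS]
    exact Finset.sum_congr rfl fun k _ => (hterm k).symm
  · -- `d_R(l)` positive ⇒ positive functional on the dual
    intro hdpos
    obtain ⟨N, f, hf⟩ := hdpos
    intro φ ψ hψ
    have hΔl := W.Δl_haar hh hl
    have hterm : ∀ k : Fin N, ∃ r : ℝ, 0 ≤ r ∧
        (TensorProduct.lid ℂ ℂ) ((TensorProduct.map φ ψ)
          (W.Δ h * ((1 : A) ⊗ₜ[ℂ] (star (f k) * f k)))) = (r : ℂ) := by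
      intro k
      have e1 : W.Δ h * ((1 : A) ⊗ₜ[ℂ] (star (f k) * f k))
          = W.Δ h * (W.Sinv (star (f k)) ⊗ₜ[ℂ] f k) := by
        have e0 : ((1 : A) ⊗ₜ[ℂ] (star (f k) * f k) : A ⊗[ℂ] A)
            = ((1 : A) ⊗ₜ[ℂ] star (f k)) * ((1 : A) ⊗ₜ[ℂ] f k) := by
          rw [Algebra.TensorProduct.tmul_mul_tmul, one_mul]
        rw [e0, ← mul_assoc]
        have e2 : W.Δ h * ((1 : A) ⊗ₜ[ℂ] star (f k))
            = W.Δ h * (W.Sinv (star (f k)) ⊗ₜ[ℂ] (1 : A)) := by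
          rw [W.strong_right_haar hh (W.Sinv (star (f k))), W.S_Sinv]
        rw [e2, mul_assoc, Algebra.TensorProduct.tmul_mul_tmul, one_mul, mul_one]
      rw [e1, WeakHopfAlgebra.map_pair_mulright]
      refine hpos _ _ ?_
      intro u
      simp only [LinearMap.coe_comp, Function.comp_apply, LinearMap.mulRight_apply]
      rw [hψ (u * f k)]
      have e3 := W.S_star (star (f k))
      rw [star_star] at e3
      rw [W.S_antimul, star_mul, e3]
    choose r hr0 hrv using hterm
    refine ⟨∑ k, r k, Finset.sum_nonneg fun k _ => hr0 k, ?_⟩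
    rw [hΔl, hf, TensorProduct.tmul_sum, Finset.mul_sum, map_sum, map_sum,
      Complex.ofReal_sum]
    exact Finset.sum_congr rfl fun k _ => hrv k
end
end

section
/- Let M be an A-module algebra over a weak *-Hopf algebra A with crossed product M⋊A. Then the map ρ : M⋊A → (M⋊A)⊗A, ρ(m⋊a) := Σ (m⋊a₍₁₎)⊗a₍₂₎, is a well-defined *-algebra homomorphism satisfying the right coaction axioms (ρ⊗id)∘ρ = (id⊗Δ)∘ρ, (id⊗ε)∘ρ = id, and (1⊗Δ(1))·(ρ(1⋊1)⊗1) = ((id⊗Δ)∘ρ)(1⋊1). Moreover {(id⊗φ)(ρ(1⋊1)) : φ ∈ A*} = {1⋊a : a ∈ A_R}, and the fixed point algebra of the dual action is M: {x ∈ M⋊A : ρ(x) ∈ (M⋊A)⊗A_L} = {m⋊1_A : m ∈ M}. -/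
open scoped TensorProduct

noncomputable section

/-- The componentwise star operation on `(M ⋊ A) ⊗ A` induced by a crossed
product star operation on `M ⋊ A` and the star of `A` (conjugate-linear,
hence an additive map). -/
def tstarC {A : Type} [Ring A] [Algebra ℂ A] [StarRing A] [StarModule ℂ A]
    {M : Type} [Ring M] [Algebra ℂ M] [StarRing M] [StarModule ℂ M]
    {W : WeakHopfAlgebra A} (MA : ModuleAlgebra W M) (CSt : CrossedStar MA) :
    Crossed MA ⊗[ℂ] A →+ Crossed MA ⊗[ℂ] A :=
  TensorProduct.liftAddHom
    (AddMonoidHom.mk'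
      (fun c => AddMonoidHom.mk' (fun a => CSt.st c ⊗ₜ[ℂ] star a)
        (fun x y => by
          show CSt.st c ⊗ₜ[ℂ] star (x + y)
              = CSt.st c ⊗ₜ[ℂ] star x + CSt.st c ⊗ₜ[ℂ] star y
          rw [star_add, TensorProduct.tmul_add]))
      (fun x y => by
        ext a
        show CSt.st (x + y) ⊗ₜ[ℂ] star a
            = CSt.st x ⊗ₜ[ℂ] star a + CSt.st y ⊗ₜ[ℂ] star a
        rw [map_add, TensorProduct.add_tmul]))
    (fun r c a => by
      show CSt.st (r • c) ⊗ₜ[ℂ] star a = CSt.st c ⊗ₜ[ℂ] star (r • a)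
      rw [CSt.st_smul, star_smul, TensorProduct.smul_tmul]
      rfl)

section Aux

open TensorProduct LinearMap

set_option maxHeartbeats 1000000
set_option synthInstance.maxHeartbeats 200000

variable {A : Type} [Ring A] [Algebra ℂ A] [StarRing A] [StarModule ℂ A]
variable {M : Type} [Ring M] [Algebra ℂ M] [StarRing M] [StarModule ℂ M]
variable {W : WeakHopfAlgebra A} {MA : ModuleAlgebra W M}

/-- E6'': coassociativity of Δ at 1 combined with unit_weak, in explicit sum form. -/
theorem aux_E6 {ι : Type} (s : Finset ι) (u v : ι → A)
    (hs : W.Δ 1 = ∑ p ∈ s, u p ⊗ₜ[ℂ] v p) :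
    (∑ p ∈ s, u p ⊗ₜ[ℂ] W.Δ (v p))
      = ∑ p ∈ s, ∑ q ∈ s, u q ⊗ₜ[ℂ] ((v q * u p) ⊗ₜ[ℂ] v p) := by
  have h1 := W.unit_weak
  have h2 := congrArg (TensorProduct.assoc ℂ A A A) h1
  rw [W.coassoc 1] at h2
  rw [hs] at h2
  simpa [TensorProduct.sum_tmul, TensorProduct.tmul_sum, map_sum,
    TensorProduct.assoc_symm_tmul, TensorProduct.assoc_tmul,
    Finset.mul_sum, Finset.sum_mul, Algebra.TensorProduct.tmul_mul_tmul] using h2.symm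

/-- E6b: from unit_weak'. -/
theorem aux_E6b {ι : Type} (s : Finset ι) (u v : ι → A)
    (hs : W.Δ 1 = ∑ p ∈ s, u p ⊗ₜ[ℂ] v p) :
    (∑ p ∈ s, u p ⊗ₜ[ℂ] W.Δ (v p))
      = ∑ p ∈ s, ∑ q ∈ s, u p ⊗ₜ[ℂ] ((u q * v p) ⊗ₜ[ℂ] v q) := by
  have h1 := W.unit_weak'
  have h2 := congrArg (TensorProduct.assoc ℂ A A A) h1
  rw [W.coassoc 1] at h2
  rw [hs] at h2
  simpa [TensorProduct.sum_tmul, TensorProduct.tmul_sum, map_sum,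
    TensorProduct.assoc_symm_tmul, TensorProduct.assoc_tmul,
    Finset.mul_sum, Finset.sum_mul, Algebra.TensorProduct.tmul_mul_tmul] using h2.symm

/-- Form I : `Δ b = (b ⊗ 1) Δ 1` for `b ∈ A_L`. -/
theorem AL_exp (φ : A →ₗ[ℂ] ℂ) {ι : Type} (s : Finset ι) (u v : ι → A)
    (hs : W.Δ 1 = ∑ p ∈ s, u p ⊗ₜ[ℂ] v p) :
    (TensorProduct.lid ℂ A) ((TensorProduct.map φ (LinearMap.id : A →ₗ[ℂ] A)) (W.Δ 1))
      = ∑ p ∈ s, φ (u p) • v p := by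
  rw [hs]; simp

theorem AL_delta {b : A} (hb : b ∈ W.AL) :
    W.Δ b = (b ⊗ₜ[ℂ] (1 : A)) * W.Δ 1 := by
  obtain ⟨φ, rfl⟩ := hb
  obtain ⟨s, hs⟩ := TensorProduct.exists_finset (W.Δ (1 : A))
  have h6 := aux_E6 (W := W) s Prod.fst Prod.snd hs
  have h2 := congrArg (TensorProduct.lid ℂ (A ⊗[ℂ] A) ∘ TensorProduct.map φ LinearMap.id) h6
  simp only [Function.comp_apply, map_sum, TensorProduct.map_tmul, LinearMap.id_coe, id_eq,
    TensorProduct.lid_tmul] at h2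
  have hb := AL_exp (W := W) φ s Prod.fst Prod.snd hs
  simp only [hb]
  calc W.Δ (∑ p ∈ s, φ p.1 • p.2) = ∑ p ∈ s, φ p.1 • W.Δ p.2 := by
        rw [map_sum]; simp
    _ = ∑ x ∈ s, ∑ q ∈ s, φ q.1 • (q.2 * x.1) ⊗ₜ[ℂ] x.2 := h2
    _ = (∑ p ∈ s, φ p.1 • p.2) ⊗ₜ[ℂ] 1 * W.Δ 1 := by
        rw [hs]
        simp only [TensorProduct.sum_tmul, Finset.sum_mul, Finset.mul_sum,
          TensorProduct.smul_tmul', smul_mul_assoc,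
          Algebra.TensorProduct.tmul_mul_tmul, one_mul]

theorem AL_delta' {b : A} (hb : b ∈ W.AL) :
    W.Δ b = W.Δ 1 * (b ⊗ₜ[ℂ] (1 : A)) := by
  obtain ⟨φ, rfl⟩ := hb
  obtain ⟨s, hs⟩ := TensorProduct.exists_finset (W.Δ (1 : A))
  have h6 := aux_E6b (W := W) s Prod.fst Prod.snd hs
  have h2 := congrArg (TensorProduct.lid ℂ (A ⊗[ℂ] A) ∘ TensorProduct.map φ LinearMap.id) h6
  simp only [Function.comp_apply, map_sum, TensorProduct.map_tmul, LinearMap.id_coe, id_eq,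
    TensorProduct.lid_tmul] at h2
  have hb := AL_exp (W := W) φ s Prod.fst Prod.snd hs
  simp only [hb]
  calc W.Δ (∑ p ∈ s, φ p.1 • p.2) = ∑ p ∈ s, φ p.1 • W.Δ p.2 := by
        rw [map_sum]; simp
    _ = ∑ x ∈ s, ∑ q ∈ s, φ x.1 • (q.1 * x.2) ⊗ₜ[ℂ] q.2 := h2
    _ = ∑ q ∈ s, ∑ x ∈ s, φ x.1 • (q.1 * x.2) ⊗ₜ[ℂ] q.2 := Finset.sum_comm
    _ = W.Δ 1 * (∑ p ∈ s, φ p.1 • p.2) ⊗ₜ[ℂ] 1 := by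
        rw [hs]
        simp [TensorProduct.sum_tmul, Finset.sum_mul, Finset.mul_sum,
          TensorProduct.smul_tmul', TensorProduct.tmul_smul, mul_smul_comm,
          Algebra.TensorProduct.tmul_mul_tmul]
        exact Finset.sum_comm

/-- The target counital map `ε_t(x) = Σ ε(1₍₁₎x) 1₍₂₎`. -/
def epsT (W : WeakHopfAlgebra A) : A →ₗ[ℂ] A :=
  (TensorProduct.lid ℂ A).toLinearMap ∘ₗ TensorProduct.map W.ε LinearMap.id
    ∘ₗ LinearMap.mulLeft ℂ (W.Δ 1) ∘ₗ (TensorProduct.mk ℂ A A).flip 1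

theorem epsT_apply {ι : Type} (s : Finset ι) (u v : ι → A)
    (hs : W.Δ 1 = ∑ p ∈ s, u p ⊗ₜ[ℂ] v p) (x : A) :
    epsT W x = ∑ p ∈ s, W.ε (u p * x) • v p := by
  simp only [epsT, LinearMap.comp_apply, TensorProduct.mk_apply, LinearMap.flip_apply,
    LinearMap.mulLeft_apply, LinearEquiv.coe_coe]
  rw [hs]
  simp [Finset.sum_mul, Algebra.TensorProduct.tmul_mul_tmul]

theorem epsT_eq_swIdS (x : A) : W.swIdS x = epsT W x := by
  obtain ⟨s, hs⟩ := TensorProduct.exists_finset (W.Δ (1 : A))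
  rw [WeakHopfAlgebra.swIdS, W.antipode_right x, epsT_apply s Prod.fst Prod.snd hs, hs]
  simp

theorem epsT_mem_AL (x : A) : epsT W x ∈ W.AL := by
  refine ⟨W.ε ∘ₗ LinearMap.mulRight ℂ x, ?_⟩
  obtain ⟨s, hs⟩ := TensorProduct.exists_finset (W.Δ (1 : A))
  rw [epsT_apply s Prod.fst Prod.snd hs, hs]
  simp

theorem sum_epsT (a : A) {ι : Type} (s : Finset ι) (x y : ι → A)
    (hs : W.Δ a = ∑ p ∈ s, x p ⊗ₜ[ℂ] y p) :
    ∑ p ∈ s, epsT W (x p) * y p = a := by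
  obtain ⟨t, ht⟩ := TensorProduct.exists_finset (W.Δ (1 : A))
  have hd : W.Δ a = ∑ q ∈ t, ∑ p ∈ s, (q.1 * x p) ⊗ₜ[ℂ] (q.2 * y p) := by
    conv_lhs => rw [show a = 1 * a from (one_mul a).symm]
    rw [W.Δ_mul, ht, hs]
    simp only [Finset.sum_mul, Finset.mul_sum, Algebra.TensorProduct.tmul_mul_tmul]
    exact Finset.sum_comm
  have hc := W.counit_left a
  rw [hd] at hc
  simp only [map_sum, TensorProduct.map_tmul, LinearMap.id_coe, id_eq,
    TensorProduct.lid_tmul] at hc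
  calc ∑ p ∈ s, epsT W (x p) * y p
      = ∑ p ∈ s, ∑ q ∈ t, W.ε (q.1 * x p) • (q.2 * y p) := by
        refine Finset.sum_congr rfl fun p _ => ?_
        rw [epsT_apply t Prod.fst Prod.snd ht]
        simp [Finset.sum_mul, smul_mul_assoc]
    _ = ∑ q ∈ t, ∑ p ∈ s, W.ε (q.1 * x p) • (q.2 * y p) := Finset.sum_comm
    _ = a := hc

theorem act_mul_rep (MA : ModuleAlgebra W M) (a : A) {ι : Type} (s : Finset ι) (x y : ι → A)
    (hs : W.Δ a = ∑ p ∈ s, x p ⊗ₜ[ℂ] y p) (m n : M) :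
    MA.act a (m * n) = ∑ p ∈ s, MA.act (x p) m * MA.act (y p) n := by
  rw [MA.act_mul', hs]
  simp

theorem act_one_epsT (MA : ModuleAlgebra W M) (a : A) :
    MA.act a 1 = MA.act (epsT W a) 1 := by
  rw [MA.act_unit, epsT_eq_swIdS]

theorem AL_act (MA : ModuleAlgebra W M) {b : A} (hb : b ∈ W.AL) (m : M) :
    MA.act b m = MA.act b 1 * m := by
  obtain ⟨s, hs⟩ := TensorProduct.exists_finset (W.Δ (1 : A))
  have hΔb : W.Δ b = ∑ p ∈ s, (p.1 * b) ⊗ₜ[ℂ] p.2 := by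
    rw [AL_delta' hb, hs]
    simp [Finset.sum_mul, Algebra.TensorProduct.tmul_mul_tmul]
  calc MA.act b m = MA.act b (1 * m) := by rw [one_mul]
    _ = ∑ p ∈ s, MA.act (p.1 * b) 1 * MA.act p.2 m := act_mul_rep MA b s _ _ hΔb 1 m
    _ = ∑ p ∈ s, MA.act p.1 (MA.act b 1) * MA.act p.2 m := by
        refine Finset.sum_congr rfl fun p _ => ?_
        rw [MA.act_mul]
    _ = MA.act 1 (MA.act b 1 * m) := (act_mul_rep MA 1 s Prod.fst Prod.snd hs _ m).symm
    _ = MA.act b 1 * m := MA.act_one _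

theorem cmk_rel (MA : ModuleAlgebra W M) (m : M) (a : A) {b : A}
    (hb : b ∈ Submodule.span ℂ W.AL) :
    cmk MA ((m * MA.act b 1) ⊗ₜ[ℂ] a) = cmk MA (m ⊗ₜ[ℂ] (b * a)) := by
  induction hb using Submodule.span_induction with
  | mem c hc =>
      have : ((m * MA.act c 1) ⊗ₜ[ℂ] a) - (m ⊗ₜ[ℂ] (c * a)) ∈ crossedRel MA :=
        Submodule.subset_span ⟨m, a, c, hc, rfl⟩
      rwa [cmk, Submodule.mkQ_apply, Submodule.mkQ_apply, Submodule.Quotient.eq]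
  | zero => simp
  | add c d _ _ hc hd =>
      have he : MA.act (c + d) 1 = MA.act c 1 + MA.act d 1 := by
        rw [map_add]; rfl
      rw [he, mul_add, TensorProduct.add_tmul, map_add, hc, hd, add_mul,
        TensorProduct.tmul_add, map_add]
  | smul r c _ hc =>
      have he : MA.act (r • c) 1 = r • MA.act c 1 := by
        rw [map_smul]; rfl
      rw [he, mul_smul_comm, smul_mul_assoc]
      simp only [TensorProduct.tmul_smul, TensorProduct.smul_tmul']
      rw [← TensorProduct.smul_tmul', ← TensorProduct.smul_tmul', map_smul, map_smul, hc]

/-- The coaction on the level of `M ⊗ A`. -/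
def rho0 (MA : ModuleAlgebra W M) : M ⊗[ℂ] A →ₗ[ℂ] Crossed MA ⊗[ℂ] A :=
  (TensorProduct.map (cmk MA) LinearMap.id) ∘ₗ (TensorProduct.assoc ℂ M A A).symm.toLinearMap
    ∘ₗ (TensorProduct.map LinearMap.id W.Δ)

theorem rho0_def (MA : ModuleAlgebra W M) (t : M ⊗[ℂ] A) :
    rho0 MA t = (TensorProduct.map (cmk MA) (LinearMap.id : A →ₗ[ℂ] A))
      ((TensorProduct.assoc ℂ M A A).symm
        ((TensorProduct.map (LinearMap.id : M →ₗ[ℂ] M) W.Δ) t)) := rfl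

theorem rho0_tmul (MA : ModuleAlgebra W M) (m : M) (a : A) {ι : Type} (s : Finset ι)
    (x y : ι → A) (hs : W.Δ a = ∑ p ∈ s, x p ⊗ₜ[ℂ] y p) :
    rho0 MA (m ⊗ₜ[ℂ] a) = ∑ p ∈ s, cmk MA (m ⊗ₜ[ℂ] x p) ⊗ₜ[ℂ] y p := by
  simp only [rho0, LinearMap.comp_apply, TensorProduct.map_tmul, LinearMap.id_coe, id_eq, hs,
    TensorProduct.tmul_sum, map_sum, TensorProduct.assoc_symm_tmul, LinearEquiv.coe_coe]

theorem delta_AL_mul {b : A} (hb : b ∈ W.AL) (a : A) {ι : Type} (s : Finset ι)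
    (x y : ι → A) (hs : W.Δ a = ∑ p ∈ s, x p ⊗ₜ[ℂ] y p) :
    W.Δ (b * a) = ∑ p ∈ s, (b * x p) ⊗ₜ[ℂ] y p := by
  rw [W.Δ_mul, AL_delta hb, mul_assoc, show W.Δ 1 * W.Δ a = W.Δ a by
    rw [← W.Δ_mul, one_mul], hs]
  simp [Finset.mul_sum, Algebra.TensorProduct.tmul_mul_tmul]

theorem rho0_ker (MA : ModuleAlgebra W M) : crossedRel MA ≤ LinearMap.ker (rho0 MA) := by
  refine Submodule.span_le.mpr ?_
  rintro _ ⟨m, a, b, hb, rfl⟩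
  simp only [SetLike.mem_coe, LinearMap.mem_ker, map_sub, sub_eq_zero]
  obtain ⟨s, hs⟩ := TensorProduct.exists_finset (W.Δ a)
  rw [rho0_tmul MA (m * MA.act b 1) a s Prod.fst Prod.snd hs,
    rho0_tmul MA m (b * a) s (fun p => b * p.1) Prod.snd (delta_AL_mul hb a s _ _ hs)]
  refine Finset.sum_congr rfl fun p _ => ?_
  rw [cmk_rel MA m p.1 (Submodule.subset_span hb)]

/-- The dual coaction `ρ`. -/
def rhoD (MA : ModuleAlgebra W M) : Crossed MA →ₗ[ℂ] Crossed MA ⊗[ℂ] A :=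
  Submodule.liftQ _ (rho0 MA) (rho0_ker MA)

theorem rhoD_cmk (MA : ModuleAlgebra W M) (t : M ⊗[ℂ] A) :
    rhoD MA (cmk MA t) = rho0 MA t := rfl

theorem rhoD_mkQ (MA : ModuleAlgebra W M) (t : M ⊗[ℂ] A) :
    rhoD MA ((crossedRel MA).mkQ t) = rho0 MA t := rfl

theorem cmk_mkQ (MA : ModuleAlgebra W M) (t : M ⊗[ℂ] A) :
    (crossedRel MA).mkQ t = cmk MA t := rfl

/-- `Σ m (a₍₁₎ ▷ 1) ⋊ a₍₂₎ = m ⋊ a`. -/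
theorem key1 (MA : ModuleAlgebra W M) (m : M) (a : A) {ι : Type} (s : Finset ι)
    (x y : ι → A) (hs : W.Δ a = ∑ p ∈ s, x p ⊗ₜ[ℂ] y p) :
    ∑ p ∈ s, cmk MA ((m * MA.act (x p) 1) ⊗ₜ[ℂ] y p) = cmk MA (m ⊗ₜ[ℂ] a) := by
  have h1 : ∀ p ∈ s, cmk MA ((m * MA.act (x p) 1) ⊗ₜ[ℂ] y p)
      = cmk MA (m ⊗ₜ[ℂ] (epsT W (x p) * y p)) := by
    intro p _
    rw [act_one_epsT, cmk_rel MA m (y p) (Submodule.subset_span (epsT_mem_AL (x p)))]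
  rw [Finset.sum_congr rfl h1, ← map_sum, ← TensorProduct.tmul_sum,
    sum_epsT a s x y hs]

def e0 (MA : ModuleAlgebra W M) : M ⊗[ℂ] A →ₗ[ℂ] M :=
  LinearMap.mul' ℂ M ∘ₗ TensorProduct.map LinearMap.id (MA.act.flip 1)

theorem e0_tmul (MA : ModuleAlgebra W M) (m : M) (a : A) :
    e0 MA (m ⊗ₜ[ℂ] a) = m * MA.act a 1 := by
  simp [e0]

theorem e0_ker (MA : ModuleAlgebra W M) : crossedRel MA ≤ LinearMap.ker (e0 MA) := by
  refine Submodule.span_le.mpr ?_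
  rintro _ ⟨m, a, b, hb, rfl⟩
  simp only [SetLike.mem_coe, LinearMap.mem_ker, map_sub, sub_eq_zero, e0_tmul]
  rw [MA.act_mul, AL_act MA hb]
  simp only [mul_assoc, mul_one]
  rw [AL_act MA hb (MA.act a 1)]

/-- The conditional expectation `E : M ⋊ A → M`, `m ⋊ a ↦ m (a ▷ 1)`. -/
def EC (MA : ModuleAlgebra W M) : Crossed MA →ₗ[ℂ] M :=
  Submodule.liftQ _ (e0 MA) (e0_ker MA)

theorem EC_cmk (MA : ModuleAlgebra W M) (m : M) (a : A) :
    EC MA (cmk MA (m ⊗ₜ[ℂ] a)) = m * MA.act a 1 := rfl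

/-- The retraction `Λ : (M ⋊ A) ⊗ A → M ⋊ A`. -/
def Lam (MA : ModuleAlgebra W M) : Crossed MA ⊗[ℂ] A →ₗ[ℂ] Crossed MA :=
  cmk MA ∘ₗ TensorProduct.map (EC MA) LinearMap.id

theorem Lam_tmul (MA : ModuleAlgebra W M) (z : Crossed MA) (a : A) :
    Lam MA (z ⊗ₜ[ℂ] a) = cmk MA (EC MA z ⊗ₜ[ℂ] a) := by
  simp [Lam]

theorem Lam_rho (MA : ModuleAlgebra W M) (z : Crossed MA) :
    Lam MA (rhoD MA z) = z := by
  obtain ⟨t, rfl⟩ := Submodule.mkQ_surjective _ z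
  show Lam MA (rhoD MA (cmk MA t)) = cmk MA t
  induction t using TensorProduct.induction_on with
  | zero => simp
  | add u v hu hv => rw [map_add, map_add, map_add, hu, hv]
  | tmul m a =>
      obtain ⟨s, hs⟩ := TensorProduct.exists_finset (W.Δ a)
      rw [rhoD_cmk, rho0_tmul MA m a s Prod.fst Prod.snd hs, map_sum]
      rw [Finset.sum_congr rfl fun p _ => Lam_tmul MA _ p.2]
      rw [Finset.sum_congr rfl fun p _ => by rw [EC_cmk]]
      exact key1 MA m a s Prod.fst Prod.snd hs

/-- A representation of `Δ 1` whose right legs lie in `A_L`. -/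
theorem delta1_AL_rep : ∃ (s : Finset (A × A)) (β : A × A → A),
    (∀ q ∈ s, β q ∈ W.AL) ∧ W.Δ (1 : A) = ∑ q ∈ s, q.1 ⊗ₜ[ℂ] β q := by
  obtain ⟨s, hs⟩ := TensorProduct.exists_finset (W.Δ (1 : A))
  refine ⟨s, fun q => ∑ p ∈ s, W.ε (q.2 * p.1) • p.2, fun q _ => ?_, ?_⟩
  · refine ⟨W.ε ∘ₗ LinearMap.mulLeft ℂ q.2, ?_⟩
    rw [hs]; simp
  · have h6 := aux_E6 (W := W) s Prod.fst Prod.snd hs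
    have h2 := congrArg (TensorProduct.map (LinearMap.id : A →ₗ[ℂ] A)
      ((TensorProduct.lid ℂ A).toLinearMap ∘ₗ TensorProduct.map W.ε LinearMap.id)) h6
    simp only [map_sum, TensorProduct.map_tmul, LinearMap.id_coe, id_eq,
      LinearMap.comp_apply, LinearEquiv.coe_coe, TensorProduct.lid_tmul] at h2
    have hL : ∀ p ∈ s, (p.1 : A) ⊗ₜ[ℂ]
        ((TensorProduct.lid ℂ A) ((TensorProduct.map W.ε LinearMap.id) (W.Δ p.2))) = p.1 ⊗ₜ[ℂ] p.2 := by
      intro p _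
      rw [W.counit_left p.2]
    rw [Finset.sum_congr rfl hL] at h2
    rw [← hs] at h2
    rw [h2, Finset.sum_comm]
    refine Finset.sum_congr rfl fun q _ => ?_
    rw [TensorProduct.tmul_sum]

/-- `1 ⋊ 1` is a left unit for the crossed product multiplication. -/
theorem oneC_mul (MA : ModuleAlgebra W M) (CS : CrossedMul MA) (z : Crossed MA) :
    CS.mul (oneC MA) z = z := by
  obtain ⟨s, β, hβ, hs⟩ := delta1_AL_rep (W := W)
  obtain ⟨t, rfl⟩ := Submodule.mkQ_surjective _ z
  show CS.mul (oneC MA) (cmk MA t) = cmk MA t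
  induction t using TensorProduct.induction_on with
  | zero => simp
  | add u v hu hv => rw [map_add, map_add, hu, hv]
  | tmul m' a' =>
      rw [oneC, CS.mul_def 1 m' 1 a', hs]
      simp only [map_sum, TensorProduct.map_tmul, LinearMap.comp_apply,
        LinearMap.flip_apply, LinearMap.mulLeft_apply, LinearMap.mulRight_apply, one_mul]
      have h1 : ∀ q ∈ s, cmk MA ((MA.act q.1 m') ⊗ₜ[ℂ] (β q * a'))
          = cmk MA ((MA.act q.1 m' * MA.act (β q) 1) ⊗ₜ[ℂ] a') := by
        intro q hq
        rw [cmk_rel MA _ a' (Submodule.subset_span (hβ q hq))]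
      rw [Finset.sum_congr rfl h1, ← map_sum, ← TensorProduct.sum_tmul]
      have h2 : ∑ q ∈ s, MA.act q.1 m' * MA.act (β q) 1 = m' := by
        rw [← act_mul_rep MA 1 s Prod.fst β hs m' 1, mul_one, MA.act_one]
      rw [h2]

/-- Coassociativity in explicit sum form. -/
theorem coassoc_rep (a : A) (s : Finset (A × A))
    (hs : W.Δ a = ∑ p ∈ s, p.1 ⊗ₜ[ℂ] p.2) (F G : A × A → Finset (A × A))
    (hF : ∀ p ∈ s, W.Δ p.1 = ∑ q ∈ F p, q.1 ⊗ₜ[ℂ] q.2)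
    (hG : ∀ p ∈ s, W.Δ p.2 = ∑ q ∈ G p, q.1 ⊗ₜ[ℂ] q.2) :
    (∑ p ∈ s, ∑ q ∈ F p, q.1 ⊗ₜ[ℂ] (q.2 ⊗ₜ[ℂ] p.2))
      = ∑ p ∈ s, ∑ q ∈ G p, p.1 ⊗ₜ[ℂ] (q.1 ⊗ₜ[ℂ] q.2) := by
  have h := W.coassoc a
  rw [hs] at h
  simp only [map_sum, TensorProduct.map_tmul, LinearMap.id_coe, id_eq] at h
  calc (∑ p ∈ s, ∑ q ∈ F p, q.1 ⊗ₜ[ℂ] (q.2 ⊗ₜ[ℂ] p.2))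
      = ∑ p ∈ s, (TensorProduct.assoc ℂ A A A) (W.Δ p.1 ⊗ₜ[ℂ] p.2) := by
        refine Finset.sum_congr rfl fun p hp => ?_
        rw [hF p hp]
        simp [TensorProduct.sum_tmul]
    _ = ∑ p ∈ s, p.1 ⊗ₜ[ℂ] W.Δ p.2 := h
    _ = ∑ p ∈ s, ∑ q ∈ G p, p.1 ⊗ₜ[ℂ] (q.1 ⊗ₜ[ℂ] q.2) := by
        refine Finset.sum_congr rfl fun p hp => ?_
        rw [hG p hp, TensorProduct.tmul_sum]

theorem rho_counit (MA : ModuleAlgebra W M) (z : Crossed MA) :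
    (TensorProduct.rid ℂ (Crossed MA))
      ((TensorProduct.map (LinearMap.id : Crossed MA →ₗ[ℂ] Crossed MA) W.ε) (rhoD MA z)) = z := by
  obtain ⟨t, rfl⟩ := Submodule.mkQ_surjective _ z
  induction t using TensorProduct.induction_on with
  | zero => simp
  | add u v hu hv => simp only [map_add]; rw [hu, hv]
  | tmul m a =>
      obtain ⟨s, hs⟩ := TensorProduct.exists_finset (W.Δ a)
      have hc := W.counit_right a
      rw [hs] at hc
      simp only [map_sum, TensorProduct.map_tmul, LinearMap.id_coe, id_eq,
        TensorProduct.rid_tmul] at hc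
      rw [rhoD_mkQ, rho0_tmul MA m a s Prod.fst Prod.snd hs]
      simp only [map_sum, TensorProduct.map_tmul, LinearMap.id_coe, id_eq,
        TensorProduct.rid_tmul, cmk_mkQ]
      calc ∑ p ∈ s, W.ε p.2 • cmk MA (m ⊗ₜ[ℂ] p.1)
          = cmk MA (m ⊗ₜ[ℂ] ∑ p ∈ s, W.ε p.2 • p.1) := by
            rw [TensorProduct.tmul_sum, map_sum]
            refine Finset.sum_congr rfl fun p _ => ?_
            rw [TensorProduct.tmul_smul, map_smul]
        _ = cmk MA (m ⊗ₜ[ℂ] a) := by rw [hc]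

theorem rho_coassoc (MA : ModuleAlgebra W M) (z : Crossed MA) :
    (TensorProduct.assoc ℂ (Crossed MA) A A)
      ((TensorProduct.map (rhoD MA) (LinearMap.id : A →ₗ[ℂ] A)) (rhoD MA z))
      = (TensorProduct.map (LinearMap.id : Crossed MA →ₗ[ℂ] Crossed MA) W.Δ) (rhoD MA z) := by
  obtain ⟨t, rfl⟩ := Submodule.mkQ_surjective _ z
  induction t using TensorProduct.induction_on with
  | zero => simp
  | add u v hu hv => simp only [map_add]; rw [hu, hv]
  | tmul m a =>
      obtain ⟨s, hs⟩ := TensorProduct.exists_finset (W.Δ a)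
      set F : A × A → Finset (A × A) :=
        fun p => (TensorProduct.exists_finset (W.Δ p.1)).choose with hFdef
      have hF : ∀ p ∈ s, W.Δ p.1 = ∑ q ∈ F p, q.1 ⊗ₜ[ℂ] q.2 :=
        fun p _ => (TensorProduct.exists_finset (W.Δ p.1)).choose_spec
      set G : A × A → Finset (A × A) :=
        fun p => (TensorProduct.exists_finset (W.Δ p.2)).choose with hGdef
      have hG : ∀ p ∈ s, W.Δ p.2 = ∑ q ∈ G p, q.1 ⊗ₜ[ℂ] q.2 :=
        fun p _ => (TensorProduct.exists_finset (W.Δ p.2)).choose_spec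
      have hco := coassoc_rep a s hs F G hF hG
      have h2 := congrArg (TensorProduct.map (cmk MA ∘ₗ TensorProduct.mk ℂ M A m)
        (LinearMap.id : A ⊗[ℂ] A →ₗ[ℂ] A ⊗[ℂ] A)) hco
      simp only [map_sum, TensorProduct.map_tmul, LinearMap.id_coe, id_eq,
        LinearMap.comp_apply, TensorProduct.mk_apply] at h2
      rw [rhoD_mkQ, rho0_tmul MA m a s Prod.fst Prod.snd hs]
      calc (TensorProduct.assoc ℂ (Crossed MA) A A)
            ((TensorProduct.map (rhoD MA) LinearMap.id)
              (∑ p ∈ s, cmk MA (m ⊗ₜ[ℂ] p.1) ⊗ₜ[ℂ] p.2))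
          = ∑ p ∈ s, ∑ q ∈ F p, cmk MA (m ⊗ₜ[ℂ] q.1) ⊗ₜ[ℂ] (q.2 ⊗ₜ[ℂ] p.2) := by
            rw [map_sum, map_sum]
            refine Finset.sum_congr rfl fun p hp => ?_
            rw [TensorProduct.map_tmul, rhoD_cmk,
              rho0_tmul MA m p.1 (F p) Prod.fst Prod.snd (hF p hp)]
            simp [TensorProduct.sum_tmul]
        _ = ∑ p ∈ s, ∑ q ∈ G p, cmk MA (m ⊗ₜ[ℂ] p.1) ⊗ₜ[ℂ] (q.1 ⊗ₜ[ℂ] q.2) := h2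
        _ = (TensorProduct.map LinearMap.id W.Δ)
              (∑ p ∈ s, cmk MA (m ⊗ₜ[ℂ] p.1) ⊗ₜ[ℂ] p.2) := by
            rw [map_sum]
            refine (Finset.sum_congr rfl fun p hp => ?_).symm
            rw [TensorProduct.map_tmul, hG p hp]
            simp [TensorProduct.tmul_sum]

theorem mulT_tmul (MA : ModuleAlgebra W M) (CS : CrossedMul MA) (B : Type) [Ring B]
    [Algebra ℂ B] (x y : Crossed MA) (b b' : B) :
    mulT MA CS B (x ⊗ₜ[ℂ] b) (y ⊗ₜ[ℂ] b') = CS.mul x y ⊗ₜ[ℂ] (b * b') := by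
  simp [mulT, LinearMap.compl₁₂_apply, TensorProduct.mapBilinear_apply, LinearMap.mul_apply']

theorem delta_mul_rep (c d : A) {ι κ : Type} (s : Finset ι) (x y : ι → A)
    (hsc : W.Δ c = ∑ p ∈ s, x p ⊗ₜ[ℂ] y p) (t : Finset κ) (u v : κ → A)
    (hsd : W.Δ d = ∑ q ∈ t, u q ⊗ₜ[ℂ] v q) :
    W.Δ (c * d) = ∑ z ∈ s ×ˢ t, (x z.1 * u z.2) ⊗ₜ[ℂ] (y z.1 * v z.2) := by
  rw [W.Δ_mul, hsc, hsd, Finset.sum_mul_sum, Finset.sum_product]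
  simp [Algebra.TensorProduct.tmul_mul_tmul]

theorem rho_mul (MA : ModuleAlgebra W M) (CS : CrossedMul MA) (x y : Crossed MA) :
    rhoD MA (CS.mul x y) = mulT MA CS A (rhoD MA x) (rhoD MA y) := by
  obtain ⟨t, rfl⟩ := Submodule.mkQ_surjective _ x
  obtain ⟨t', rfl⟩ := Submodule.mkQ_surjective _ y
  induction t using TensorProduct.induction_on with
  | zero => simp
  | add u v hu hv => simp only [map_add, LinearMap.add_apply]; rw [hu, hv]
  | tmul m a =>
      induction t' using TensorProduct.induction_on with
      | zero => simp
      | add u v hu hv => simp only [map_add]; rw [hu, hv]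
      | tmul m' a' =>
          obtain ⟨s, hs⟩ := TensorProduct.exists_finset (W.Δ a)
          obtain ⟨s', hs'⟩ := TensorProduct.exists_finset (W.Δ a')
          set F : A × A → Finset (A × A) :=
            fun p => (TensorProduct.exists_finset (W.Δ p.1)).choose with hFdef
          have hF : ∀ p : A × A, W.Δ p.1 = ∑ q ∈ F p, q.1 ⊗ₜ[ℂ] q.2 :=
            fun p => (TensorProduct.exists_finset (W.Δ p.1)).choose_spec
          set G : A × A → Finset (A × A) :=
            fun p => (TensorProduct.exists_finset (W.Δ p.2)).choose with hGdef
          have hG : ∀ p : A × A, W.Δ p.2 = ∑ q ∈ G p, q.1 ⊗ₜ[ℂ] q.2 :=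
            fun p => (TensorProduct.exists_finset (W.Δ p.2)).choose_spec
          have hco := coassoc_rep a s hs F G (fun p _ => hF p) (fun p _ => hG p)
          have hpsi : ∀ r : A × A,
              (∑ p ∈ s, ∑ q ∈ F p,
                cmk MA ((m * MA.act q.1 m') ⊗ₜ[ℂ] (q.2 * r.1)) ⊗ₜ[ℂ] (p.2 * r.2))
              = ∑ p ∈ s, ∑ q ∈ G p,
                cmk MA ((m * MA.act p.1 m') ⊗ₜ[ℂ] (q.1 * r.1)) ⊗ₜ[ℂ] (q.2 * r.2) := by
            intro r
            have h2 := congrArg ((TensorProduct.map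
              (cmk MA ∘ₗ (TensorProduct.map ((LinearMap.mulLeft ℂ m) ∘ₗ (MA.act.flip m'))
                (LinearMap.mulRight ℂ r.1)))
              (LinearMap.mulRight ℂ r.2)) ∘ₗ
              (TensorProduct.assoc ℂ A A A).symm.toLinearMap) hco
            simpa only [map_sum, LinearMap.comp_apply, LinearEquiv.coe_coe,
              TensorProduct.assoc_symm_tmul, TensorProduct.map_tmul,
              LinearMap.flip_apply, LinearMap.mulLeft_apply, LinearMap.mulRight_apply]
              using h2
          rw [cmk_mkQ, cmk_mkQ, CS.mul_def m m' a a', rhoD_cmk, rhoD_cmk, rhoD_cmk, hs]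
          simp only [map_sum, TensorProduct.map_tmul, LinearMap.comp_apply,
            LinearMap.flip_apply, LinearMap.mulLeft_apply, LinearMap.mulRight_apply]
          have hL : ∀ p ∈ s, rho0 MA ((m * MA.act p.1 m') ⊗ₜ[ℂ] (p.2 * a'))
              = ∑ q ∈ G p, ∑ r ∈ s', cmk MA ((m * MA.act p.1 m') ⊗ₜ[ℂ] (q.1 * r.1))
                  ⊗ₜ[ℂ] (q.2 * r.2) := by
            intro p _
            rw [rho0_tmul MA _ _ ((G p) ×ˢ s')
              (fun z => z.1.1 * z.2.1) (fun z => z.1.2 * z.2.2)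
              (delta_mul_rep p.2 a' (G p) Prod.fst Prod.snd (hG p) s' Prod.fst Prod.snd hs'),
              Finset.sum_product]
          rw [Finset.sum_congr rfl hL]
          have hR : mulT MA CS A (rho0 MA (m ⊗ₜ[ℂ] a)) (rho0 MA (m' ⊗ₜ[ℂ] a'))
              = ∑ r ∈ s', ∑ p ∈ s, ∑ q ∈ F p,
                  cmk MA ((m * MA.act q.1 m') ⊗ₜ[ℂ] (q.2 * r.1)) ⊗ₜ[ℂ] (p.2 * r.2) := by
            rw [rho0_tmul MA m a s Prod.fst Prod.snd hs,
              rho0_tmul MA m' a' s' Prod.fst Prod.snd hs']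
            rw [map_sum]
            refine Finset.sum_congr rfl fun r _ => ?_
            rw [map_sum, LinearMap.sum_apply]
            refine Finset.sum_congr rfl fun p _ => ?_
            rw [mulT_tmul, CS.mul_def m m' p.1 r.1, hF p]
            simp only [map_sum, TensorProduct.map_tmul, LinearMap.comp_apply,
              LinearMap.flip_apply, LinearMap.mulLeft_apply, LinearMap.mulRight_apply]
            rw [TensorProduct.sum_tmul]
          rw [hR]
          calc (∑ p ∈ s, ∑ q ∈ G p, ∑ r ∈ s',
                cmk MA ((m * MA.act p.1 m') ⊗ₜ[ℂ] (q.1 * r.1)) ⊗ₜ[ℂ] (q.2 * r.2))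
              = ∑ p ∈ s, ∑ r ∈ s', ∑ q ∈ G p,
                cmk MA ((m * MA.act p.1 m') ⊗ₜ[ℂ] (q.1 * r.1)) ⊗ₜ[ℂ] (q.2 * r.2) :=
                Finset.sum_congr rfl fun p _ => Finset.sum_comm
            _ = ∑ r ∈ s', ∑ p ∈ s, ∑ q ∈ G p,
                cmk MA ((m * MA.act p.1 m') ⊗ₜ[ℂ] (q.1 * r.1)) ⊗ₜ[ℂ] (q.2 * r.2) :=
                Finset.sum_comm
            _ = ∑ r ∈ s', ∑ p ∈ s, ∑ q ∈ F p,
                cmk MA ((m * MA.act q.1 m') ⊗ₜ[ℂ] (q.2 * r.1)) ⊗ₜ[ℂ] (p.2 * r.2) :=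
                Finset.sum_congr rfl fun r _ => (hpsi r).symm

theorem tensorStar_tmul (x y : A) :
    tensorStar A A (x ⊗ₜ[ℂ] y) = star x ⊗ₜ[ℂ] star y := by
  simp [tensorStar]

theorem tensorStar_smul (r : ℂ) (t : A ⊗[ℂ] A) :
    tensorStar A A (r • t) = (starRingEnd ℂ r) • tensorStar A A t := by
  induction t using TensorProduct.induction_on with
  | zero => simp
  | add u v hu hv => rw [smul_add, map_add, hu, hv, map_add, smul_add]
  | tmul x y =>
      rw [TensorProduct.smul_tmul', tensorStar_tmul, tensorStar_tmul, star_smul,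
        TensorProduct.smul_tmul']
      rfl

/-- The triple componentwise star on `A ⊗ (A ⊗ A)`. -/
def tristar : A ⊗[ℂ] (A ⊗[ℂ] A) →+ A ⊗[ℂ] (A ⊗[ℂ] A) :=
  TensorProduct.liftAddHom
    (AddMonoidHom.mk'
      (fun (a : A) => AddMonoidHom.mk' (fun t => star a ⊗ₜ[ℂ] tensorStar A A t)
        (fun x y => by
          show star a ⊗ₜ[ℂ] tensorStar A A (x + y) = _
          rw [map_add, TensorProduct.tmul_add]))
      (fun x y => by
        refine AddMonoidHom.ext fun t => ?_
        show star (x + y) ⊗ₜ[ℂ] tensorStar A A t = _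
        rw [star_add, TensorProduct.add_tmul]
        rfl))
    (fun r a t => by
      show star (r • a) ⊗ₜ[ℂ] tensorStar A A t = star a ⊗ₜ[ℂ] tensorStar A A (r • t)
      rw [star_smul, tensorStar_smul, TensorProduct.smul_tmul]
      rfl)

theorem tristar_tmul (x y z : A) :
    tristar (x ⊗ₜ[ℂ] (y ⊗ₜ[ℂ] z)) = star x ⊗ₜ[ℂ] (star y ⊗ₜ[ℂ] star z) := by
  simp [tristar, tensorStar_tmul]

theorem tstarC_tmul (MA : ModuleAlgebra W M) (CSt : CrossedStar MA) (z : Crossed MA) (a : A) :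
    tstarC MA CSt (z ⊗ₜ[ℂ] a) = CSt.st z ⊗ₜ[ℂ] star a := by
  simp [tstarC]

theorem rho_star (MA : ModuleAlgebra W M) (CSt : CrossedStar MA) (z : Crossed MA) :
    rhoD MA (CSt.st z) = tstarC MA CSt (rhoD MA z) := by
  obtain ⟨t, rfl⟩ := Submodule.mkQ_surjective _ z
  induction t using TensorProduct.induction_on with
  | zero => simp
  | add u v hu hv => simp only [map_add]; rw [hu, hv]
  | tmul m a =>
      obtain ⟨s, hs⟩ := TensorProduct.exists_finset (W.Δ a)
      set F : A × A → Finset (A × A) :=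
        fun p => (TensorProduct.exists_finset (W.Δ p.1)).choose with hFdef
      have hF : ∀ p : A × A, W.Δ p.1 = ∑ q ∈ F p, q.1 ⊗ₜ[ℂ] q.2 :=
        fun p => (TensorProduct.exists_finset (W.Δ p.1)).choose_spec
      set G : A × A → Finset (A × A) :=
        fun p => (TensorProduct.exists_finset (W.Δ p.2)).choose with hGdef
      have hG : ∀ p : A × A, W.Δ p.2 = ∑ q ∈ G p, q.1 ⊗ₜ[ℂ] q.2 :=
        fun p => (TensorProduct.exists_finset (W.Δ p.2)).choose_spec
      have hco := coassoc_rep a s hs F G (fun p _ => hF p) (fun p _ => hG p)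
      have hstar : ∀ c : A, ∀ (u : Finset (A × A)), W.Δ c = ∑ q ∈ u, q.1 ⊗ₜ[ℂ] q.2 →
          W.Δ (star c) = ∑ q ∈ u, star q.1 ⊗ₜ[ℂ] star q.2 := by
        intro c u hc
        rw [W.Δ_star, hc, map_sum]
        exact Finset.sum_congr rfl fun q _ => tensorStar_tmul q.1 q.2
      -- apply the triple star followed by a linear map to coassociativity
      have hphi := congrArg (((TensorProduct.map
          (cmk MA ∘ₗ TensorProduct.map (MA.act.flip (star m)) (LinearMap.id : A →ₗ[ℂ] A))
          (LinearMap.id : A →ₗ[ℂ] A)) ∘ₗ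
          (TensorProduct.assoc ℂ A A A).symm.toLinearMap).toAddMonoidHom.comp tristar) hco
      simp only [AddMonoidHom.coe_comp, LinearMap.toAddMonoidHom_coe, Function.comp_apply,
        map_sum, tristar_tmul, LinearMap.comp_apply, LinearEquiv.coe_coe,
        TensorProduct.assoc_symm_tmul, TensorProduct.map_tmul, LinearMap.id_coe, id_eq,
        LinearMap.flip_apply] at hphi
      -- left hand side
      rw [cmk_mkQ, CSt.st_def m a, hstar a s hs]
      simp only [map_sum, TensorProduct.map_tmul, LinearMap.id_coe, id_eq,
        LinearMap.flip_apply]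
      have hL : ∀ p ∈ s, rhoD MA (cmk MA ((MA.act (star p.1) (star m)) ⊗ₜ[ℂ] star p.2))
          = ∑ q ∈ G p, cmk MA ((MA.act (star p.1) (star m)) ⊗ₜ[ℂ] star q.1)
              ⊗ₜ[ℂ] star q.2 := by
        intro p _
        rw [rhoD_cmk, rho0_tmul MA _ _ (G p) (fun q => star q.1) (fun q => star q.2)
          (hstar p.2 (G p) (hG p))]
      rw [Finset.sum_congr rfl hL]
      -- right hand side
      rw [rhoD_cmk, rho0_tmul MA m a s Prod.fst Prod.snd hs, map_sum]
      have hR : ∀ p ∈ s, tstarC MA CSt (cmk MA (m ⊗ₜ[ℂ] p.1) ⊗ₜ[ℂ] p.2)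
          = ∑ q ∈ F p, cmk MA ((MA.act (star q.1) (star m)) ⊗ₜ[ℂ] star q.2)
              ⊗ₜ[ℂ] star p.2 := by
        intro p _
        rw [tstarC_tmul, CSt.st_def m p.1, hstar p.1 (F p) (hF p)]
        simp only [map_sum, TensorProduct.map_tmul, LinearMap.id_coe, id_eq,
          LinearMap.flip_apply]
        rw [TensorProduct.sum_tmul]
      rw [Finset.sum_congr rfl hR]
      exact hphi.symm

theorem iA_apply (MA : ModuleAlgebra W M) (a : A) :
    iA MA a = cmk MA ((1 : M) ⊗ₜ[ℂ] a) := rfl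

theorem iM_apply (MA : ModuleAlgebra W M) (m : M) :
    iM MA m = cmk MA (m ⊗ₜ[ℂ] (1 : A)) := rfl

theorem rho_unit (MA : ModuleAlgebra W M) (CS : CrossedMul MA) :
    mulT MA CS (A ⊗[ℂ] A) ((oneC MA) ⊗ₜ[ℂ] (W.Δ 1))
      ((TensorProduct.assoc ℂ (Crossed MA) A A) ((rhoD MA (oneC MA)) ⊗ₜ[ℂ] (1 : A)))
    = (TensorProduct.map (LinearMap.id : Crossed MA →ₗ[ℂ] Crossed MA) W.Δ)
        (rhoD MA (oneC MA)) := by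
  obtain ⟨s, β, hβ, hs⟩ := delta1_AL_rep (W := W)
  have h0 : rhoD MA (oneC MA) = ∑ q ∈ s, cmk MA ((1 : M) ⊗ₜ[ℂ] q.1) ⊗ₜ[ℂ] β q := by
    rw [oneC, rhoD_cmk, rho0_tmul MA 1 1 s Prod.fst β hs]
  rw [h0]
  rw [TensorProduct.sum_tmul, map_sum, map_sum]
  simp only [TensorProduct.assoc_tmul]
  rw [map_sum]
  refine Finset.sum_congr rfl fun q hq => ?_
  rw [mulT_tmul, oneC_mul MA CS, TensorProduct.map_tmul, ← AL_delta' (hβ q hq)]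
  rfl

theorem c7 (MA : ModuleAlgebra W M) (φ : A →ₗ[ℂ] ℂ) :
    (TensorProduct.rid ℂ (Crossed MA))
      ((TensorProduct.map (LinearMap.id : Crossed MA →ₗ[ℂ] Crossed MA) φ)
        (rhoD MA (oneC MA)))
    = iA MA ((TensorProduct.rid ℂ A)
        ((TensorProduct.map (LinearMap.id : A →ₗ[ℂ] A) φ) (W.Δ 1))) := by
  obtain ⟨s, hs⟩ := TensorProduct.exists_finset (W.Δ (1 : A))
  have h0 : rhoD MA (oneC MA) = ∑ q ∈ s, cmk MA ((1 : M) ⊗ₜ[ℂ] q.1) ⊗ₜ[ℂ] q.2 := by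
    rw [oneC, rhoD_cmk, rho0_tmul MA 1 1 s Prod.fst Prod.snd hs]
  rw [h0, hs]
  simp only [map_sum, TensorProduct.map_tmul, LinearMap.id_coe, id_eq,
    TensorProduct.rid_tmul, iA_apply]
  exact Finset.sum_congr rfl fun q _ => by rw [TensorProduct.tmul_smul, map_smul]

def gMap (MA : ModuleAlgebra W M) : Crossed MA ⊗[ℂ] (Submodule.span ℂ W.AL) →ₗ[ℂ] M :=
  LinearMap.mul' ℂ M ∘ₗ TensorProduct.map (EC MA)
    ((MA.act.flip 1) ∘ₗ (Submodule.span ℂ W.AL).subtype)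

theorem Lam_incl (MA : ModuleAlgebra W M) (T : Crossed MA ⊗[ℂ] (Submodule.span ℂ W.AL)) :
    Lam MA ((TensorProduct.map (LinearMap.id : Crossed MA →ₗ[ℂ] Crossed MA)
      (Submodule.span ℂ W.AL).subtype) T) = iM MA (gMap MA T) := by
  induction T using TensorProduct.induction_on with
  | zero => simp
  | add u v hu hv => simp only [map_add]; rw [hu, hv]
  | tmul z b =>
      have h1 : Lam MA ((TensorProduct.map LinearMap.id (Submodule.span ℂ W.AL).subtype)
          (z ⊗ₜ[ℂ] b)) = cmk MA (EC MA z ⊗ₜ[ℂ] (b : A)) := by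
        rw [TensorProduct.map_tmul, Lam_tmul]
        rfl
      rw [h1, iM_apply]
      have h2 : gMap MA (z ⊗ₜ[ℂ] b) = EC MA z * MA.act (b : A) 1 := by
        simp [gMap]
      rw [h2, cmk_rel MA (EC MA z) 1 b.2, mul_one]

end Aux









/-- Proposition 3.4 of [NSW] (the dual coaction): the map
`ρ : M ⋊ A → (M ⋊ A) ⊗ A`, `ρ(m ⋊ a) = Σ (m ⋊ a₍₁₎) ⊗ a₍₂₎`, is a
well-defined `*`-algebra homomorphism satisfying the right coaction axioms;
moreover `(M ⋊ A)_R = {(id ⊗ φ)(ρ(1 ⋊ 1))} = 1 ⋊ A_R` and the fixed point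
algebra of the dual action is `M ⋊ 1 ≅ M`. -/
theorem dual_coaction
    {A M : Type} [Ring A] [Algebra ℂ A] [StarRing A] [StarModule ℂ A]
    [Ring M] [Algebra ℂ M] [StarRing M] [StarModule ℂ M]
    (W : WeakHopfAlgebra A) (MA : ModuleAlgebra W M)
    (CS : CrossedMul MA) (CSt : CrossedStar MA) :
    ∃ ρ : Crossed MA →ₗ[ℂ] Crossed MA ⊗[ℂ] A,
      (∀ t : M ⊗[ℂ] A,
        ρ (cmk MA t)
          = (TensorProduct.map (cmk MA) (LinearMap.id : A →ₗ[ℂ] A))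
              ((TensorProduct.assoc ℂ M A A).symm
                ((TensorProduct.map (LinearMap.id : M →ₗ[ℂ] M) W.Δ) t)))
      ∧ (∀ x y : Crossed MA, ρ (CS.mul x y) = mulT MA CS A (ρ x) (ρ y))
      ∧ (∀ x : Crossed MA, ρ (CSt.st x) = tstarC MA CSt (ρ x))
      ∧ (∀ x : Crossed MA,
          (TensorProduct.assoc ℂ (Crossed MA) A A)
              ((TensorProduct.map ρ (LinearMap.id : A →ₗ[ℂ] A)) (ρ x))
            = (TensorProduct.map (LinearMap.id : Crossed MA →ₗ[ℂ] Crossed MA) W.Δ) (ρ x))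
      ∧ (∀ x : Crossed MA,
          (TensorProduct.rid ℂ (Crossed MA))
              ((TensorProduct.map (LinearMap.id : Crossed MA →ₗ[ℂ] Crossed MA) W.ε) (ρ x))
            = x)
      ∧ (mulT MA CS (A ⊗[ℂ] A)
            ((oneC MA) ⊗ₜ[ℂ] (W.Δ 1))
            ((TensorProduct.assoc ℂ (Crossed MA) A A) ((ρ (oneC MA)) ⊗ₜ[ℂ] (1 : A)))
          = (TensorProduct.map (LinearMap.id : Crossed MA →ₗ[ℂ] Crossed MA) W.Δ)
              (ρ (oneC MA)))
      ∧ ({x : Crossed MA | ∃ φ : A →ₗ[ℂ] ℂ,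
            x = (TensorProduct.rid ℂ (Crossed MA))
              ((TensorProduct.map (LinearMap.id : Crossed MA →ₗ[ℂ] Crossed MA) φ)
                (ρ (oneC MA)))}
          = {x : Crossed MA | ∃ a ∈ W.AR, x = iA MA a})
      ∧ ({x : Crossed MA |
            ρ x ∈ LinearMap.range
              (TensorProduct.map (LinearMap.id : Crossed MA →ₗ[ℂ] Crossed MA)
                (Submodule.subtype (Submodule.span ℂ W.AL)))}
          = {x : Crossed MA | ∃ m : M, x = iM MA m}) := by
  obtain ⟨s, β, hβ, hs⟩ := delta1_AL_rep (W := W)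
  refine ⟨rhoD MA, fun t => by rw [rhoD_cmk]; rfl,
    fun x y => rho_mul MA CS x y,
    fun x => rho_star MA CSt x,
    fun x => rho_coassoc MA x,
    fun x => rho_counit MA x,
    rho_unit MA CS, ?_, ?_⟩
  · ext x
    simp only [Set.mem_setOf_eq]
    constructor
    · rintro ⟨φ, rfl⟩
      exact ⟨_, ⟨φ, rfl⟩, c7 MA φ⟩
    · rintro ⟨a, ⟨φ, rfl⟩, rfl⟩
      exact ⟨φ, (c7 MA φ).symm⟩
  · ext x
    simp only [Set.mem_setOf_eq, LinearMap.mem_range]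
    constructor
    · rintro ⟨T, hT⟩
      exact ⟨gMap MA T, by rw [← Lam_rho MA x, ← hT, Lam_incl]⟩
    · rintro ⟨m, rfl⟩
      refine ⟨∑ q ∈ s.attach, cmk MA (m ⊗ₜ[ℂ] q.1.1) ⊗ₜ[ℂ]
        (⟨β q.1, Submodule.subset_span (hβ q.1 q.2)⟩ : Submodule.span ℂ W.AL), ?_⟩
      rw [map_sum]
      simp only [TensorProduct.map_tmul, LinearMap.id_coe, id_eq, Submodule.coe_subtype]
      rw [iM_apply, rhoD_cmk, rho0_tmul MA m 1 s Prod.fst β hs]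
      exact Finset.sum_attach s fun q => cmk MA (m ⊗ₜ[ℂ] q.1) ⊗ₜ[ℂ] β q
end
end
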